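/- arXiv:2506.15430 — 8 statements merged into one kernel-verified Lean document; each statement's English description precedes it below -/
import Mathlib

section
/- Let A be a real symmetric n×n matrix, partitioned with a leading 2×2 block A11 and off-diagonal block A12 whose columns each are either entrywise negative or have the form (negative, 0)ᵀ, and suppose A11 has negative off-diagonal entries (i.e., a_{12} < 0). Let R_θ be the 2×2 rotation matrix by angle θ extended by the identity on the remaining n−2 coordinates. Then for all sufficiently small θ > 0, the matrix R_θ A R_θᵀ has: a negative (1,2)-entry, all entries of R_θ A12 negative, and unchanged remaining block A22. In particular R_θ A R_θᵀ is a discrete Schrödinger operator of the graph H obtained from G by joining vertex 2 to vertex 1 and to all neighbors of vertex 1. -/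
open Matrix

/-- `A` is a discrete Schrödinger operator of the graph `G`. -/
def IsDSO {V : Type*} [Fintype V] (G : SimpleGraph V) (A : Matrix V V ℝ) : Prop :=
  A.IsSymm ∧ ∀ i j : V, i ≠ j →
    (G.Adj i j → A i j < 0) ∧ (¬ G.Adj i j → A i j = 0)

/-- The Givens rotation on coordinates `0` and `1` by angle `θ`, extended by the identity. -/
noncomputable def givens (n : ℕ) (θ : ℝ) : Matrix (Fin (n + 2)) (Fin (n + 2)) ℝ :=
  fun i j =>
    if i = 0 ∧ j = 0 then Real.cos θ
    else if i = 0 ∧ j = 1 then -Real.sin θ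
    else if i = 1 ∧ j = 0 then Real.sin θ
    else if i = 1 ∧ j = 1 then Real.cos θ
    else if i = j then 1 else 0

/-!
On the columns `j ≥ 2`, rows `0` and `1` of `R_θ A R_θᵀ` are `cos θ • a₀ - sin θ • a₁`
and `sin θ • a₀ + cos θ • a₁`, and the block with both indices `≥ 2` is untouched.
As `a₀ⱼ < 0` and `a₁ⱼ ≤ 0`, the second row is negative for every `θ ∈ (0, π/2)`;
the first row and the `(0, 1)`-entry depend continuously on `θ` and are negative at
`θ = 0`, hence for small `θ > 0`. Finally `a₀ⱼ ≠ 0` for all `j ≠ 0` makes vertex `0`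
adjacent to every other vertex of `G`, so in the enlarged graph both `0` and `1` are
adjacent to everything, which is exactly the new sign pattern.
-/

open Filter Topology

lemma Matrix.IsSymm.mul_mul_transpose {m α : Type*} [Fintype m] [CommSemiring α]
    {A : Matrix m m α} (hA : A.IsSymm) (B : Matrix m m α) : (B * A * Bᵀ).IsSymm := by
  simp [IsSymm, transpose_mul, hA.eq, Matrix.mul_assoc]

lemma IsDSO.adj_of_ne_zero {V : Type*} [Fintype V] {G : SimpleGraph V} {A : Matrix V V ℝ}
    (hA : IsDSO G A) {i j : V} (hij : i ≠ j) (h : A i j ≠ 0) : G.Adj i j := by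
  by_contra hG
  exact h ((hA.2 i j hij).2 hG)

variable {n : ℕ}

lemma fin_eq_zero_or_eq_one_or_two_le (k : Fin (n + 2)) : k = 0 ∨ k = 1 ∨ 2 ≤ (k : ℕ) := by
  simp only [Fin.ext_iff, Fin.val_zero, Fin.val_one]
  omega

lemma fin_ne_zero_of_two_le {k : Fin (n + 2)} (hk : 2 ≤ (k : ℕ)) : k ≠ 0 := by
  rintro rfl
  simp at hk

lemma fin_ne_one_of_two_le {k : Fin (n + 2)} (hk : 2 ≤ (k : ℕ)) : k ≠ 1 := by
  rintro rfl
  simp at hk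

section Givens

variable (θ : ℝ) (A : Matrix (Fin (n + 2)) (Fin (n + 2)) ℝ)

lemma givens_apply_zero :
    givens n θ 0 = Pi.single 0 (Real.cos θ) + Pi.single 1 (-Real.sin θ) := by
  ext k
  rcases fin_eq_zero_or_eq_one_or_two_le k with rfl | rfl | hk
  · simp [givens]
  · simp [givens]
  · simp [givens, fin_ne_zero_of_two_le hk, fin_ne_one_of_two_le hk,
      (fin_ne_zero_of_two_le hk).symm]

lemma givens_apply_one :
    givens n θ 1 = Pi.single 0 (Real.sin θ) + Pi.single 1 (Real.cos θ) := by
  ext k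
  rcases fin_eq_zero_or_eq_one_or_two_le k with rfl | rfl | hk
  · simp [givens]
  · simp [givens]
  · simp [givens, fin_ne_zero_of_two_le hk, fin_ne_one_of_two_le hk,
      (fin_ne_one_of_two_le hk).symm]

lemma givens_apply_of_two_le {i : Fin (n + 2)} (hi : 2 ≤ (i : ℕ)) :
    givens n θ i = Pi.single i 1 := by
  ext k
  simp [givens, fin_ne_zero_of_two_le hi, fin_ne_one_of_two_le hi, Pi.single_apply, eq_comm]

lemma givens_conj_apply (i j : Fin (n + 2)) :
    (givens n θ * A * (givens n θ)ᵀ) i j = givens n θ i ⬝ᵥ A *ᵥ givens n θ j := by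
  rw [mul_mul_apply, transpose_transpose]

lemma givens_conj_apply_zero_one :
    (givens n θ * A * (givens n θ)ᵀ) 0 1 =
      Real.cos θ * (Real.sin θ * A 0 0 + Real.cos θ * A 0 1)
        - Real.sin θ * (Real.sin θ * A 1 0 + Real.cos θ * A 1 1) := by
  simp only [givens_conj_apply, givens_apply_zero, givens_apply_one, mulVec_add, mulVec_single,
    op_smul_eq_smul, dotProduct_add, dotProduct_smul, add_dotProduct, single_dotProduct, col_apply,
    smul_eq_mul]
  ring

lemma givens_conj_apply_zero_of_two_le {j : Fin (n + 2)} (hj : 2 ≤ (j : ℕ)) :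
    (givens n θ * A * (givens n θ)ᵀ) 0 j = Real.cos θ * A 0 j - Real.sin θ * A 1 j := by
  simp only [givens_conj_apply, givens_apply_zero, givens_apply_of_two_le θ hj, mulVec_single,
    MulOpposite.op_one, one_smul, add_dotProduct, single_dotProduct, col_apply]
  ring

lemma givens_conj_apply_one_of_two_le {j : Fin (n + 2)} (hj : 2 ≤ (j : ℕ)) :
    (givens n θ * A * (givens n θ)ᵀ) 1 j = Real.sin θ * A 0 j + Real.cos θ * A 1 j := by
  simp [givens_conj_apply, givens_apply_one, givens_apply_of_two_le θ hj, add_dotProduct,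
    mulVec_single]

lemma givens_conj_apply_of_two_le {i j : Fin (n + 2)} (hi : 2 ≤ (i : ℕ)) (hj : 2 ≤ (j : ℕ)) :
    (givens n θ * A * (givens n θ)ᵀ) i j = A i j := by
  simp [givens_conj_apply, givens_apply_of_two_le θ hi, givens_apply_of_two_le θ hj,
    mulVec_single]

end Givens

def joinOneToClosedNbhdZero (G : SimpleGraph (Fin (n + 2))) : SimpleGraph (Fin (n + 2)) :=
  G ⊔ SimpleGraph.fromRel (fun i j => i = 1 ∧ (j = 0 ∨ G.Adj 0 j))

lemma joinOneToClosedNbhdZero_adj_iff_of_two_le {G : SimpleGraph (Fin (n + 2))}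
    {i j : Fin (n + 2)} (hi : 2 ≤ (i : ℕ)) (hj : 2 ≤ (j : ℕ)) :
    (joinOneToClosedNbhdZero G).Adj i j ↔ G.Adj i j := by
  simp [joinOneToClosedNbhdZero, fin_ne_one_of_two_le hi, fin_ne_one_of_two_le hj]

lemma joinOneToClosedNbhdZero_adj_of_lt_two {G : SimpleGraph (Fin (n + 2))}
    (hG : ∀ j, j ≠ 0 → G.Adj 0 j) {i j : Fin (n + 2)} (hi : (i : ℕ) < 2) (hij : i ≠ j) :
    (joinOneToClosedNbhdZero G).Adj i j := by
  rcases fin_eq_zero_or_eq_one_or_two_le i with rfl | rfl | hi2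
  · exact Or.inl (hG j hij.symm)
  · rcases eq_or_ne j 0 with rfl | hj0
    · exact Or.inr ⟨hij, Or.inl ⟨rfl, Or.inl rfl⟩⟩
    · exact Or.inr ⟨hij, Or.inl ⟨rfl, Or.inr (hG j hj0)⟩⟩
  · omega

lemma isDSO_joinOneToClosedNbhdZero {G : SimpleGraph (Fin (n + 2))}
    {A M : Matrix (Fin (n + 2)) (Fin (n + 2)) ℝ}
    (hA : IsDSO G A) (hG : ∀ j, j ≠ 0 → G.Adj 0 j) (hM : M.IsSymm) (hM01 : M 0 1 < 0)
    (hMrow : ∀ j : Fin (n + 2), 2 ≤ (j : ℕ) → M 0 j < 0 ∧ M 1 j < 0)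
    (hMA : ∀ i j : Fin (n + 2), 2 ≤ (i : ℕ) → 2 ≤ (j : ℕ) → M i j = A i j) :
    IsDSO (joinOneToClosedNbhdZero G) M := by
  have hneg : ∀ i j : Fin (n + 2), (i : ℕ) < 2 → i ≠ j → M i j < 0 := by
    intro i j hi hij
    rcases fin_eq_zero_or_eq_one_or_two_le i with rfl | rfl | hi2 <;>
      rcases fin_eq_zero_or_eq_one_or_two_le j with rfl | rfl | hj2
    all_goals first
      | exact absurd rfl hij
      | exact hM01
      | exact (hM.apply 0 1).symm ▸ hM01
      | exact (hMrow j hj2).1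
      | exact (hMrow j hj2).2
      | omega
  refine ⟨hM, fun i j hij => ?_⟩
  by_cases hi : (i : ℕ) < 2
  · exact ⟨fun _ => hneg i j hi hij,
      fun h => absurd (joinOneToClosedNbhdZero_adj_of_lt_two hG hi hij) h⟩
  by_cases hj : (j : ℕ) < 2
  · rw [hM.apply j i]
    exact ⟨fun _ => hneg j i hj hij.symm,
      fun h => absurd (joinOneToClosedNbhdZero_adj_of_lt_two hG hj hij.symm).symm h⟩
  rw [not_lt] at hi hj
  rw [hMA i j hi hj, joinOneToClosedNbhdZero_adj_iff_of_two_le hi hj]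
  exact hA.2 i j hij

lemma eventually_neg_nhdsGT_zero {f : ℝ → ℝ} (hf : Continuous f) (h0 : f 0 < 0) :
    ∀ᶠ θ in 𝓝[>] 0, f θ < 0 :=
  ((hf.tendsto 0).eventually_lt_const h0).filter_mono nhdsWithin_le_nhds

lemma eventually_givens_conj_neg (A : Matrix (Fin (n + 2)) (Fin (n + 2)) ℝ) (h01 : A 0 1 < 0)
    (hcol : ∀ j : Fin (n + 2), 2 ≤ (j : ℕ) → A 0 j < 0 ∧ A 1 j ≤ 0) :
    ∀ᶠ θ in 𝓝[>] 0, (givens n θ * A * (givens n θ)ᵀ) 0 1 < 0 ∧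
      ∀ j : Fin (n + 2), 2 ≤ (j : ℕ) →
        (givens n θ * A * (givens n θ)ᵀ) 0 j < 0 ∧
        (givens n θ * A * (givens n θ)ᵀ) 1 j < 0 := by
  have hsc : ∀ᶠ θ in 𝓝[>] (0 : ℝ), 0 < Real.sin θ ∧ 0 < Real.cos θ := by
    filter_upwards [Ioo_mem_nhdsGT (half_pos Real.pi_pos)] with θ hθ
    exact ⟨Real.sin_pos_of_pos_of_lt_pi hθ.1 (by linarith [hθ.2, Real.pi_pos]),
      Real.cos_pos_of_mem_Ioo ⟨by linarith [hθ.1, Real.pi_pos], hθ.2⟩⟩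
  have h01' := eventually_neg_nhdsGT_zero
    (f := fun θ => Real.cos θ * (Real.sin θ * A 0 0 + Real.cos θ * A 0 1)
      - Real.sin θ * (Real.sin θ * A 1 0 + Real.cos θ * A 1 1))
    (by fun_prop) (by simpa using h01)
  have hrow : ∀ᶠ θ in 𝓝[>] (0 : ℝ), ∀ j : Fin (n + 2), 2 ≤ (j : ℕ) →
      Real.cos θ * A 0 j - Real.sin θ * A 1 j < 0 :=
    eventually_all.2 fun j => eventually_imp_distrib_left.2 fun hj =>
      eventually_neg_nhdsGT_zero (f := fun θ => Real.cos θ * A 0 j - Real.sin θ * A 1 j)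
        (by fun_prop) (by simpa using (hcol j hj).1)
  filter_upwards [hsc, h01', hrow] with θ ⟨hs, hc⟩ h01θ hrowθ
  refine ⟨by rwa [givens_conj_apply_zero_one], fun j hj => ⟨?_, ?_⟩⟩
  · rw [givens_conj_apply_zero_of_two_le θ A hj]
    exact hrowθ j hj
  · rw [givens_conj_apply_one_of_two_le θ A hj]
    exact add_neg_of_neg_of_nonpos (mul_neg_of_pos_of_neg hs (hcol j hj).1)
      (mul_nonpos_of_nonneg_of_nonpos hc.le (hcol j hj).2)

/-- Conjugating by a Givens rotation with a small positive angle turns a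
discrete Schrödinger operator `A` (whose first row is "more negative" than the second) into a
discrete Schrödinger operator of the supergraph `H` obtained by joining vertex `1` to vertex `0`
and to all neighbors of vertex `0`. -/
theorem givens_rotation_small_angle
    {n : ℕ} (G : SimpleGraph (Fin (n + 2))) (A : Matrix (Fin (n + 2)) (Fin (n + 2)) ℝ)
    (hA : IsDSO G A)
    (h01 : A 0 1 < 0)
    (hcol : ∀ j : Fin (n + 2), 2 ≤ (j : ℕ) →
      (A 0 j < 0 ∧ A 1 j < 0) ∨ (A 0 j < 0 ∧ A 1 j = 0)) :
    ∃ ε > 0, ∀ θ : ℝ, 0 < θ → θ < ε →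
      ((givens n θ * A * (givens n θ)ᵀ) 0 1 < 0) ∧
      (∀ j : Fin (n + 2), 2 ≤ (j : ℕ) →
        (givens n θ * A * (givens n θ)ᵀ) 0 j < 0 ∧
        (givens n θ * A * (givens n θ)ᵀ) 1 j < 0) ∧
      (∀ i j : Fin (n + 2), 2 ≤ (i : ℕ) → 2 ≤ (j : ℕ) →
        (givens n θ * A * (givens n θ)ᵀ) i j = A i j) ∧
      IsDSO (G ⊔ SimpleGraph.fromRel (fun i j => i = 1 ∧ (j = 0 ∨ G.Adj 0 j)))
        (givens n θ * A * (givens n θ)ᵀ) := by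
  have hcol' : ∀ j : Fin (n + 2), 2 ≤ (j : ℕ) → A 0 j < 0 ∧ A 1 j ≤ 0 := fun j hj => by
    rcases hcol j hj with ⟨h0, h1⟩ | ⟨h0, h1⟩
    exacts [⟨h0, h1.le⟩, ⟨h0, h1.le⟩]
  have hG : ∀ j, j ≠ 0 → G.Adj 0 j := by
    intro j hj
    rcases fin_eq_zero_or_eq_one_or_two_le j with rfl | rfl | hj2
    · exact absurd rfl hj
    · exact hA.adj_of_ne_zero hj.symm h01.ne
    · exact hA.adj_of_ne_zero hj.symm (hcol' j hj2).1.ne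
  obtain ⟨ε, hε, hsub⟩ :=
    mem_nhdsGT_iff_exists_Ioo_subset.1 (eventually_givens_conj_neg A h01 hcol')
  refine ⟨ε, hε, fun θ hθ hθε => ?_⟩
  obtain ⟨hM01, hMrow⟩ := hsub ⟨hθ, hθε⟩
  have hMA : ∀ i j : Fin (n + 2), 2 ≤ (i : ℕ) → 2 ≤ (j : ℕ) →
      (givens n θ * A * (givens n θ)ᵀ) i j = A i j :=
    fun i j hi hj => givens_conj_apply_of_two_le θ A hi hj
  exact ⟨hM01, hMrow, hMA,
    isDSO_joinOneToClosedNbhdZero hA hG (hA.1.mul_mul_transpose _) hM01 hMrow hMA⟩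
end

section
/- Let Λ = {λ₁ ≤ λ₂ ≤ ... ≤ λₙ} be a multiset of n real numbers. Then Λ is the spectrum of some discrete Schrödinger operator of the complete graph Kₙ if and only if λ₁ < λ₂ (the smallest value is simple). -/
/-!
If `A` has negative off-diagonal entries and `μ` is its least eigenvalue, then `A - μ` is positive
semidefinite, and replacing a kernel vector `v` by `|v|` does not increase the quadratic form, so
`|v|` lies in the kernel as well; the row of `(A - μ) |v| = 0` at a zero entry of `|v|` then forces
`v = 0`. Hence no `μ`-eigenvector has a zero entry, whereas two orthonormal `μ`-eigenvectors `v, w`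
would give the eigenvector `w i • v - v i • w` vanishing at `i`.

Conversely, spectra with a simple least value are realised by induction on `n`, bordering: if
`A u = α u` with `u > 0`, then for `b = -t • u` the matrix `[[A, b], [bᵀ, c]]` has characteristic
polynomial `((X - α) (X - c) - ‖b‖²) · χ_A / (X - α)`. For `μ < α < ν` the choice `c = μ + ν - α`,
`‖b‖² = (α - μ) (ν - α)` turns the quadratic factor into `(X - μ) (X - ν)`, and `(-b, α - μ)` is a
positive eigenvector for `μ` with which the induction continues.
-/

open Polynomial

open Matrix

namespace Matrix

variable {ι R : Type*} [Fintype ι]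

section OrderedRing

variable [CommRing R] [LinearOrder R] [IsStrictOrderedRing R] {M : Matrix ι ι R}

theorem abs_dotProduct_mulVec_abs_le (hM : ∀ i j, i ≠ j → M i j ≤ 0) (v : ι → R) :
    |v| ⬝ᵥ M *ᵥ |v| ≤ v ⬝ᵥ M *ᵥ v := by
  simp only [dotProduct, mulVec, Finset.mul_sum, Pi.abs_apply]
  refine Finset.sum_le_sum fun i _ => Finset.sum_le_sum fun j _ => ?_
  rcases eq_or_ne i j with rfl | hij
  · linear_combination M i i * abs_mul_abs_self (v i)
  · nlinarith [hM i j hij, le_abs_self (v i * v j), abs_mul (v i) (v j)]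

theorem eq_zero_of_mulVec_eq_zero_of_nonneg (hM : ∀ i j, i ≠ j → M i j < 0) {b : ι → R}
    (hb : 0 ≤ b) (hMb : M *ᵥ b = 0) {k : ι} (hk : b k = 0) : b = 0 := by
  have hrow : ∑ j, M k j * b j = 0 := congrFun hMb k
  have hterms := (Finset.sum_eq_zero_iff_of_nonpos fun j _ => ?_).mp hrow
  · funext j
    rcases eq_or_ne k j with rfl | hkj
    · exact hk
    · exact (mul_eq_zero.mp (hterms j (Finset.mem_univ j))).resolve_left (hM k j hkj).ne
  · rcases eq_or_ne k j with rfl | hkj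
    · rw [hk, mul_zero]
    · exact mul_nonpos_of_nonpos_of_nonneg (hM k j hkj).le (hb j)

end OrderedRing

variable {M : Matrix ι ι ℝ}

theorem PosSemidef.mulVec_abs_eq_zero (hM : M.PosSemidef) (hoff : ∀ i j, i ≠ j → M i j ≤ 0)
    {v : ι → ℝ} (hv : M *ᵥ v = 0) : M *ᵥ |v| = 0 := by
  have hquad := hM.dotProduct_mulVec_zero_iff |v|
  rw [star_trivial] at hquad
  refine hquad.mp (le_antisymm ?_ ?_)
  · simpa [hv] using abs_dotProduct_mulVec_abs_le hoff v
  · simpa using hM.dotProduct_mulVec_nonneg |v|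

theorem PosSemidef.apply_ne_zero_of_mulVec_eq_zero (hM : M.PosSemidef)
    (hoff : ∀ i j, i ≠ j → M i j < 0) {v : ι → ℝ} (hv : M *ᵥ v = 0) (hv0 : v ≠ 0) (k : ι) :
    v k ≠ 0 := by
  intro hk
  have habs := eq_zero_of_mulVec_eq_zero_of_nonneg hoff (abs_nonneg v)
    (hM.mulVec_abs_eq_zero (fun i j hij => (hoff i j hij).le) hv) (k := k) (by simp [hk])
  exact hv0 (funext fun i => abs_eq_zero.mp (congrFun habs i))

variable [DecidableEq ι]

theorem IsHermitian.posSemidef_sub_smul_one {A : Matrix ι ι ℝ} (hA : A.IsHermitian) {μ : ℝ}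
    (hμ : ∀ k, μ ≤ hA.eigenvalues k) : (A - μ • 1).PosSemidef := by
  rw [posSemidef_iff_isHermitian_and_spectrum_nonneg, ← Algebra.algebraMap_eq_smul_one,
    ← spectrum.sub_singleton_eq, hA.spectrum_real_eq_range_eigenvalues]
  refine ⟨hA.sub (IsSelfAdjoint.algebraMap _ (.all μ)), ?_⟩
  rintro _ ⟨_, ⟨k, rfl⟩, μ', rfl, rfl⟩
  exact sub_nonneg.mpr (hμ k)

theorem IsHermitian.eq_of_eigenvalues_eq_of_min {A : Matrix ι ι ℝ} (hA : A.IsHermitian)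
    (hoff : ∀ i j, i ≠ j → A i j < 0) {i j : ι} (hmin : ∀ k, hA.eigenvalues i ≤ hA.eigenvalues k)
    (hij : hA.eigenvalues j = hA.eigenvalues i) : i = j := by
  by_contra hne
  set μ := hA.eigenvalues i
  have hM := hA.posSemidef_sub_smul_one hmin
  have hoffM : ∀ k l, k ≠ l → (A - μ • 1) k l < 0 := fun k l hkl => by
    simpa [one_apply_ne hkl] using hoff k l hkl
  have hker : ∀ l, hA.eigenvalues l = μ → (A - μ • 1) *ᵥ ⇑(hA.eigenvectorBasis l) = 0 :=
    fun l hl => by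
      rw [sub_mulVec, smul_mulVec, one_mulVec, hA.mulVec_eigenvectorBasis, hl, sub_self]
  have hdot : ∀ k l, ⇑(hA.eigenvectorBasis k) ⬝ᵥ ⇑(hA.eigenvectorBasis l) =
      if k = l then 1 else 0 := fun k l => by
    rw [← hA.eigenvectorBasis.inner_eq_ite, EuclideanSpace.inner_eq_star_dotProduct,
      star_trivial, dotProduct_comm]
  set v := ⇑(hA.eigenvectorBasis i)
  set w := ⇑(hA.eigenvectorBasis j)
  have hvv : v ⬝ᵥ v = 1 := by simpa using hdot i i
  have hvw : v ⬝ᵥ w = 0 := by simpa [hne] using hdot i j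
  have hww : w ⬝ᵥ w = 1 := by simpa using hdot j j
  have hv0 : v ≠ 0 := fun h => by simp [h] at hvv
  have hvi := hM.apply_ne_zero_of_mulVec_eq_zero hoffM (hker i rfl) hv0 i
  have hcomb : w i • v - v i • w = 0 := by
    by_contra hcomb
    refine hM.apply_ne_zero_of_mulVec_eq_zero hoffM ?_ hcomb i ?_
    · rw [mulVec_sub, mulVec_smul, mulVec_smul, hker i rfl, hker j hij, smul_zero, smul_zero,
        sub_zero]
    · simp [mul_comm]
  have := congrArg (· ⬝ᵥ w) hcomb
  simp only [sub_dotProduct, smul_dotProduct, hvw, hww, smul_eq_mul, zero_dotProduct] at this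
  exact hvi (by linarith)

theorem IsHermitian.eq_of_charpoly_eq_prod_of_min {A : Matrix ι ι ℝ} (hA : A.IsHermitian)
    (hoff : ∀ i j, i ≠ j → A i j < 0) {lam : ι → ℝ} (hcp : A.charpoly = ∏ i, (X - C (lam i)))
    {i j : ι} (hmin : ∀ k, lam i ≤ lam k) (hij : lam j = lam i) : i = j := by
  have hroots : Finset.univ.val.map hA.eigenvalues = Finset.univ.val.map lam := by
    have h := hA.roots_charpoly_eq_eigenvalues
    rw [hcp, roots_prod _ _ (Finset.prod_ne_zero_iff.mpr fun k _ => X_sub_C_ne_zero _)] at h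
    simpa using h.symm
  have hfiber (f : ι → ℝ) :
      (Finset.univ.filter fun k => lam i = f k).card = (Finset.univ.val.map f).count (lam i) := by
    rw [Multiset.count_map]; rfl
  by_contra hne
  have hcount : 1 < (Finset.univ.filter fun k => lam i = hA.eigenvalues k).card := by
    rw [hfiber, hroots, ← hfiber]
    exact Finset.one_lt_card.mpr ⟨i, by simp, j, by simp [hij], hne⟩
  obtain ⟨i', hi', j', hj', hne'⟩ := Finset.one_lt_card.mp hcount
  simp only [Finset.mem_filter, Finset.mem_univ, true_and] at hi' hj'
  refine hne' (hA.eq_of_eigenvalues_eq_of_min hoff (fun k => ?_) (hj'.symm.trans hi'))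
  obtain ⟨l, -, hl⟩ := Multiset.mem_map.mp
    (hroots ▸ Multiset.mem_map_of_mem hA.eigenvalues (Finset.mem_univ_val k))
  rw [← hi', ← hl]
  exact hmin l

end Matrix

section Border

variable {N K : Type*} [Fintype N] [Field K]

theorem det_fromBlocks_replicateCol_of_mulVec_eq [DecidableEq N] {M : Matrix N N K}
    (hM : M.det ≠ 0) {b : N → K} {s : K} (hs : s ≠ 0) (hb : M *ᵥ b = s • b) (b' : N → K) (d : K) :
    (fromBlocks M (replicateCol (Fin 1) b) (replicateRow (Fin 1) b') (of fun _ _ => d)).det =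
      M.det * (d - s⁻¹ * (b' ⬝ᵥ b)) := by
  let := M.invertibleOfIsUnitDet (isUnit_iff_ne_zero.mpr hM)
  have hinv : ⅟M *ᵥ b = s⁻¹ • b := by
    rw [← inv_smul_smul₀ hs (⅟M *ᵥ b), ← mulVec_smul, ← hb, mulVec_mulVec, invOf_mul_self,
      one_mulVec]
  rw [det_fromBlocks₁₁, Matrix.mul_assoc, ← replicateCol_mulVec, hinv, det_unique (n := Fin 1)]
  simp [mul_comm]

def borderMatrix (A : Matrix N N K) (b : N → K) (c : K) : Matrix (N ⊕ Fin 1) (N ⊕ Fin 1) K :=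
  fromBlocks A (replicateCol (Fin 1) b) (replicateRow (Fin 1) b) (of fun _ _ => c)

theorem charpoly_borderMatrix [DecidableEq N] [Infinite K] {A : Matrix N N K} {b : N → K} {α : K}
    {q : K[X]} (hb : A *ᵥ b = α • b) (hA : A.charpoly = (X - C α) * q) (c : K) :
    (borderMatrix A b c).charpoly = ((X - C α) * (X - C c) - C (b ⬝ᵥ b)) * q := by
  -- Both sides agree, by the Schur complement, at every `x` that is not an eigenvalue of `A`.
  refine eq_of_infinite_eval_eq _ _
    ((finite_setOfPred_isRoot A.charpoly_monic.ne_zero).infinite_compl.mono fun x hx => ?_)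
  simp only [Set.mem_compl_iff, Set.mem_ofPred_eq, IsRoot.def, eval_charpoly] at hx ⊢
  have hxα : x - α ≠ 0 := fun h => hx (by rw [← eval_charpoly, hA, sub_eq_zero.mp h]; simp)
  have hsplit : scalar (N ⊕ Fin 1) x - borderMatrix A b c =
      fromBlocks (scalar N x - A) (replicateCol (Fin 1) (-b)) (replicateRow (Fin 1) (-b))
        (of fun _ _ => x - c) := by
    ext (i | i) (j | j) <;>
      simp [borderMatrix, sub_eq_add_neg, scalar_apply, diagonal_apply, Fin.fin_one_eq_zero]
  have hmul : (scalar N x - A) *ᵥ (-b) = (x - α) • (-b) := by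
    simp only [sub_mulVec, mulVec_neg, hb, scalar_apply]
    ext i
    simp only [diagonal_const_mulVec, Pi.neg_apply, Pi.sub_apply, Pi.smul_apply, smul_eq_mul]
    ring
  rw [hsplit, det_fromBlocks_replicateCol_of_mulVec_eq hx hxα hmul, ← eval_charpoly, hA]
  simp only [eval_mul, eval_sub, eval_X, eval_C, neg_dotProduct_neg]
  field_simp

theorem borderMatrix_mulVec {A : Matrix N N K} {b : N → K} {α μ c : K} (hb : A *ᵥ b = α • b)
    (hbb : b ⬝ᵥ b = (α - μ) * (c - μ)) :
    borderMatrix A b c *ᵥ Sum.elim (-b) (fun _ => α - μ) =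
      μ • Sum.elim (-b) (fun _ => α - μ) := by
  rw [borderMatrix, fromBlocks_mulVec]
  ext (i | i)
  · simp only [Sum.elim_comp_inl, mulVec_neg, hb, Sum.elim_comp_inr, Sum.elim_inl, Pi.add_apply,
      Pi.neg_apply, Pi.smul_apply, smul_eq_mul, mulVec, dotProduct, Finset.univ_unique,
      replicateCol_apply, Finset.sum_const, Finset.card_singleton, one_smul]
    ring
  · simp only [dotProduct] at hbb
    simp only [Sum.elim_comp_inl, Sum.elim_comp_inr, Sum.elim_inr, Pi.add_apply, mulVec, dotProduct,
      replicateRow_apply, Pi.neg_apply, mul_neg, Finset.sum_neg_distrib, Finset.univ_unique,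
      of_apply, Finset.sum_const, Finset.card_singleton, one_smul, Pi.smul_apply, smul_eq_mul]
    linear_combination -hbb

end Border

section DSO

variable {V W : Type*} [Fintype V] [Fintype W]

theorem isDSO_top_iff {A : Matrix V V ℝ} :
    IsDSO ⊤ A ↔ A.IsSymm ∧ ∀ i j, i ≠ j → A i j < 0 := by
  simp +contextual [IsDSO]

theorem IsDSO.reindex {G : SimpleGraph V} {A : Matrix V V ℝ} (hA : IsDSO G A) (e : V ≃ W) :
    IsDSO (G.comap e.symm) (reindex e e A) :=
  ⟨hA.1.submatrix _, fun _ _ hij => hA.2 _ _ (e.symm.injective.ne hij)⟩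

theorem isDSO_top_borderMatrix {A : Matrix V V ℝ} (hA : IsDSO ⊤ A) {b : V → ℝ}
    (hb : ∀ i, b i < 0) (c : ℝ) : IsDSO ⊤ (borderMatrix A b c) := by
  rw [isDSO_top_iff] at hA ⊢
  refine ⟨hA.1.fromBlocks (transpose_replicateCol b) (by ext; rfl), ?_⟩
  rintro (i | i) (j | j) hij
  · exact hA.2 i j (by simpa using hij)
  · exact hb i
  · exact hb j
  · exact absurd (congrArg Sum.inr (Subsingleton.elim i j)) hij

theorem exists_isDSO_top_borderMatrix [DecidableEq V] [Nonempty V] {A : Matrix V V ℝ}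
    {u : V → ℝ} {α μ ν : ℝ} {q : ℝ[X]} (hA : IsDSO ⊤ A) (hu : ∀ i, 0 < u i)
    (hAu : A *ᵥ u = α • u) (hcp : A.charpoly = (X - C α) * q) (hμ : μ < α) (hν : α < ν) :
    ∃ (B : Matrix (V ⊕ Fin 1) (V ⊕ Fin 1) ℝ) (w : V ⊕ Fin 1 → ℝ), IsDSO ⊤ B ∧
      B.charpoly = (X - C μ) * ((X - C ν) * q) ∧ (∀ p, 0 < w p) ∧ B *ᵥ w = μ • w := by
  have huu : 0 < u ⬝ᵥ u := Finset.sum_pos (fun i _ => mul_pos (hu i) (hu i)) Finset.univ_nonempty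
  have hquot : 0 < (α - μ) * (ν - α) / (u ⬝ᵥ u) := div_pos (by nlinarith) huu
  set t := √((α - μ) * (ν - α) / (u ⬝ᵥ u))
  have ht : 0 < t := Real.sqrt_pos.mpr hquot
  set b := -t • u
  have hb : A *ᵥ b = α • b := by rw [mulVec_smul, hAu, smul_comm]
  have hbb : b ⬝ᵥ b = (α - μ) * (ν - α) := by
    rw [dotProduct_smul, smul_dotProduct, smul_smul, smul_eq_mul, neg_mul_neg, ← sq,
      Real.sq_sqrt hquot.le, div_mul_cancel₀ _ huu.ne']
  have hneg_b : ∀ i, 0 < -b i := fun i => by simpa [b] using mul_pos ht (hu i)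
  refine ⟨borderMatrix A b (μ + ν - α), Sum.elim (-b) (fun _ => α - μ),
    isDSO_top_borderMatrix hA (fun i => neg_pos.mp (hneg_b i)) _, ?_, ?_,
    borderMatrix_mulVec hb (by rw [hbb]; ring)⟩
  · rw [charpoly_borderMatrix hb hcp, hbb, ← mul_assoc]
    congr 1
    simp only [map_sub, map_add, map_mul]
    ring
  · rintro (i | i)
    · exact hneg_b i
    · exact sub_pos.mpr hμ

theorem exists_isDSO_top_charpoly_eq (m : ℕ) (μ : ℝ) (r : Fin m → ℝ) (hr : ∀ k, μ < r k) :
    ∃ (A : Matrix (Fin (m + 1)) (Fin (m + 1)) ℝ) (u : Fin (m + 1) → ℝ), IsDSO ⊤ A ∧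
      A.charpoly = (X - C μ) * ∏ k, (X - C (r k)) ∧ (∀ i, 0 < u i) ∧ A *ᵥ u = μ • u := by
  induction m generalizing μ with
  | zero =>
    refine ⟨diagonal fun _ => μ, 1, isDSO_top_iff.mpr ⟨isSymm_diagonal _, fun i j hij =>
      absurd (Subsingleton.elim (α := Fin 1) i j) hij⟩, by simp [charpoly_diagonal],
      fun _ => one_pos, ?_⟩
    ext i
    simp
  | succ m ih =>
    obtain ⟨k₀, hk₀⟩ := Finite.exists_min r
    obtain ⟨α, hμα, hα⟩ := exists_between (hr k₀)
    obtain ⟨A, u, hA, hcp, hu, hAu⟩ := ih α (fun k => r k.succ) fun k => hα.trans_le (hk₀ _)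
    obtain ⟨B, w, hB, hcpB, hw, hBw⟩ :=
      exists_isDSO_top_borderMatrix hA hu hAu hcp hμα (hα.trans_le (hk₀ 0))
    let e : Fin (m + 1) ⊕ Fin 1 ≃ Fin (m + 2) := finSumFinEquiv
    refine ⟨reindex e e B, w ∘ e.symm, ?_, ?_, fun i => hw _, ?_⟩
    · simpa [SimpleGraph.comap_top e.symm.injective] using hB.reindex e
    · rw [charpoly_reindex, hcpB, Fin.prod_univ_succ]
    · rw [reindex_apply, submatrix_mulVec_equiv, Equiv.symm_symm, Function.comp_assoc,
        e.symm_comp_self, Function.comp_id, hBw]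
      rfl

end DSO

/-- A nondecreasing list `λ₁ ≤ ⋯ ≤ λₙ` (`n ≥ 2`) is the spectrum of a
discrete Schrödinger operator of the complete graph `Kₙ` if and only if `λ₁ < λ₂`. -/
theorem complete_graph_spectrum_iff
    {n : ℕ} (hn : 2 ≤ n) (lam : Fin n → ℝ) (hmono : Monotone lam) :
    (∃ A : Matrix (Fin n) (Fin n) ℝ,
        IsDSO (⊤ : SimpleGraph (Fin n)) A ∧
        A.charpoly = ∏ i : Fin n, (X - C (lam i))) ↔
      lam ⟨0, by omega⟩ < lam ⟨1, by omega⟩ := by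
  constructor
  · rintro ⟨A, hA, hcp⟩
    obtain ⟨hsymm, hoff⟩ := isDSO_top_iff.mp hA
    refine (hmono (by simp [Fin.le_def])).lt_of_ne fun h => ?_
    have := (isHermitian_iff_isSymm.mpr hsymm).eq_of_charpoly_eq_prod_of_min hoff hcp
      (fun k => hmono (by simp [Fin.le_def])) h.symm
    simp [Fin.ext_iff] at this
  · intro hlt
    obtain ⟨m, rfl⟩ : ∃ m, n = m + 2 := ⟨n - 2, by omega⟩
    obtain ⟨A, -, hA, hcp, -⟩ := exists_isDSO_top_charpoly_eq (m + 1) (lam 0)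
      (fun k => lam k.succ) fun k => hlt.trans_le (hmono (Fin.succ_pos k))
    exact ⟨A, hA, hcp.trans (Fin.prod_univ_succ fun i => X - C (lam i)).symm⟩
end

section
/- Let G be a connected unicyclic graph whose unique cycle has odd length, and let A ∈ S(G). Let p be the product of the entries of A corresponding to the edges of the cycle (one entry per edge, above the diagonal). If p < 0, then A is signature similar to a discrete Schrödinger operator of G; if p > 0, then −A is signature similar to a discrete Schrödinger operator of G. -/
namespace SimpleGraph

variable {V M : Type*} [CommMonoid M] {G H : SimpleGraph V}

namespace Walk

def dartProd (κ : V → V → M) {u v : V} (p : G.Walk u v) : M :=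
  (p.darts.map fun d => κ d.toProd.1 d.toProd.2).prod

variable (κ : V → V → M)

@[simp]
lemma dartProd_nil {u : V} : (nil : G.Walk u u).dartProd κ = 1 := rfl

@[simp]
lemma dartProd_cons {u v w : V} (h : G.Adj u v) (p : G.Walk v w) :
    (cons h p).dartProd κ = κ u v * p.dartProd κ := rfl

lemma dartProd_concat {u v w : V} (p : G.Walk u v) (h : G.Adj v w) :
    (p.concat h).dartProd κ = p.dartProd κ * κ v w := by
  simp [dartProd, darts_concat]

lemma dartProd_transfer {u v : V} (p : G.Walk u v) (hp : ∀ e ∈ p.edges, e ∈ H.edgeSet) :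
    (p.transfer H hp).dartProd κ = p.dartProd κ := by
  induction p with
  | nil => rfl
  | cons h p ih => exact congrArg (κ _ _ * ·) (ih _)

variable {κ}

lemma dartProd_mul_self (hκ : ∀ i j, κ i j * κ i j = 1) {u v : V} (p : G.Walk u v) :
    p.dartProd κ * p.dartProd κ = 1 := by
  induction p with
  | nil => simp
  | cons h p ih => rw [dartProd_cons, mul_mul_mul_comm, hκ, ih, one_mul]

lemma dartProd_eq_mul {d : V → M} (hd : ∀ i, d i * d i = 1)
    (hκ : ∀ i j, G.Adj i j → d i * d j = κ i j) {u v : V} (p : G.Walk u v) :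
    p.dartProd κ = d u * d v := by
  induction p with
  | nil => rw [dartProd_nil, hd]
  | @cons a b c h p ih =>
    rw [dartProd_cons, ih, ← hκ a b h, mul_assoc, ← mul_assoc (d b), hd, one_mul]

end Walk

lemma IsTree.exists_mul_eq_of_adj (hT : G.IsTree) {κ : V → V → M}
    (hsymm : ∀ i j, κ i j = κ j i) (hinv : ∀ i j, κ i j * κ i j = 1) :
    ∃ d : V → M, (∀ i, d i * d i = 1) ∧ ∀ i j, G.Adj i j → d i * d j = κ i j := by
  obtain ⟨r⟩ := hT.connected.nonempty
  choose p hp using hT.connected.exists_isPath r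
  have hd : ∀ i, (p i).dartProd κ * (p i).dartProd κ = 1 :=
    fun i => Walk.dartProd_mul_self hinv _
  have along : ∀ i j (h : G.Adj i j), i ∈ (p j).support →
      (p i).dartProd κ * (p j).dartProd κ = κ i j := by
    intro i j h hi
    rw [hT.isAcyclic.path_concat (hp i) (hp j) h hi, Walk.dartProd_concat, ← mul_assoc, hd,
      one_mul]
  refine ⟨fun i => (p i).dartProd κ, hd, fun i j h => ?_⟩
  by_cases hi : i ∈ (p j).support
  · exact along i j h hi
  · have hj := hT.isAcyclic.mem_support_of_ne_mem_support_of_adj_of_isPath (hp i) (hp j) h hi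
    rw [mul_comm, hsymm]
    exact along j i h.symm hj

lemma isTree_deleteEdges_of_mem_edges_isCycle [Fintype V] (hG : G.Connected)
    (hcount : G.edgeSet.ncard = Fintype.card V) {u x y : V} {c : G.Walk u u} (hc : c.IsCycle)
    (he : s(x, y) ∈ c.edges) : (G.deleteEdges {s(x, y)}).IsTree := by
  refine isTree_iff_connected_and_card.mpr
    ⟨hG.connected_delete_edge_of_not_isBridge fun hb => hb.notMem_edges_of_isCycle hc he, ?_⟩
  rw [Nat.card_coe_set_eq, edgeSet_deleteEdges, Set.ncard_sdiff_singleton_add_one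
    (c.edges_subset_edgeSet he) G.edgeSet.toFinite, hcount, Nat.card_eq_fintype_card]

lemma exists_mul_eq_of_adj_of_dartProd_cycle_eq_one [Fintype V] (hG : G.Connected)
    (hcount : G.edgeSet.ncard = Fintype.card V) {v : V} {c : G.Walk v v} (hc : c.IsCycle)
    {κ : V → V → M} (hsymm : ∀ i j, κ i j = κ j i) (hinv : ∀ i j, κ i j * κ i j = 1)
    (hprod : c.dartProd κ = 1) :
    ∃ d : V → M, (∀ i, d i * d i = 1) ∧ ∀ i j, G.Adj i j → d i * d j = κ i j := by
  cases c with
  | nil => exact absurd rfl hc.ne_nil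
  | @cons _ b _ h P =>
    have hP := (Walk.cons_isCycle_iff P h).mp hc
    have hT := isTree_deleteEdges_of_mem_edges_isCycle (x := v) (y := b) hG hcount hc (by simp)
    obtain ⟨d, hd, hdκ⟩ := hT.exists_mul_eq_of_adj hsymm hinv
    have hPe : ∀ e ∈ P.edges, e ∉ ({s(v, b)} : Set (Sym2 V)) := fun e he hvb =>
      hP.2 (Set.mem_singleton_iff.mp hvb ▸ he)
    have hPT : P.dartProd κ = d b * d v :=
      calc P.dartProd κ = (P.toDeleteEdges {s(v, b)} hPe).dartProd κ :=
            (Walk.dartProd_transfer κ P _).symm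
        _ = d b * d v := Walk.dartProd_eq_mul hd hdκ _
    have hvb : d v * d b = κ v b := by
      rw [Walk.dartProd_cons, hPT] at hprod
      calc d v * d b = 1 * (d b * d v) := by rw [one_mul, mul_comm]
        _ = κ v b * ((d b * d v) * (d b * d v)) := by rw [← hprod, mul_assoc]
        _ = κ v b := by rw [mul_mul_mul_comm, hd, hd, one_mul, mul_one]
    refine ⟨d, hd, fun i j hij => ?_⟩
    by_cases he : s(i, j) = s(v, b)
    · rcases Sym2.eq_iff.mp he with ⟨rfl, rfl⟩ | ⟨rfl, rfl⟩
      · exact hvb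
      · rw [mul_comm, hvb, hsymm]
    · exact hdκ i j (deleteEdges_adj.mpr ⟨hij, he⟩)

end SimpleGraph

/-- `-sign x`, except that `0 ↦ -1`, which keeps it an involution. -/
noncomputable def negSign (x : ℝ) : ℝ := if x < 0 then 1 else -1

lemma negSign_mul_self (x : ℝ) : negSign x * negSign x = 1 := by
  unfold negSign; split_ifs <;> norm_num

lemma negSign_mul (x : ℝ) : negSign x * x = -|x| := by
  unfold negSign
  split_ifs with hx
  · rw [one_mul, abs_of_neg hx, neg_neg]
  · rw [abs_of_nonneg (not_lt.mp hx), neg_one_mul]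

lemma prod_map_negSign_of_odd_of_prod_neg {l : List ℝ} (hodd : Odd l.length)
    (hneg : l.prod < 0) : (l.map negSign).prod = 1 := by
  have habs : (l.map abs).prod = |l.prod| := (map_list_prod absHom l).symm
  have hmul : (l.map negSign).prod * l.prod = 1 * l.prod :=
    calc (l.map negSign).prod * l.prod = ((l.map abs).map Neg.neg).prod := by
          nth_rw 2 [← List.map_id l]
          rw [← List.prod_map_mul, List.map_map]
          simp only [Function.comp_def, id, negSign_mul]
      _ = 1 * l.prod := by
          rw [List.prod_map_neg, List.length_map, hodd.neg_one_pow, habs, abs_of_neg hneg,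
            neg_one_mul, neg_neg, one_mul]
  exact mul_right_cancel₀ hneg.ne hmul

theorem exists_isDSO_diagonal_mul_mul_diagonal_of_prod_neg
    {V : Type*} [Fintype V] [DecidableEq V]
    (G : SimpleGraph V) (hG : G.Connected)
    (hcount : G.edgeSet.ncard = Fintype.card V)
    {v : V} (c : G.Walk v v) (hc : c.IsCycle) (hodd : Odd c.length)
    (A : Matrix V V ℝ) (hsymm : A.IsSymm)
    (hsupp : ∀ i j : V, i ≠ j → (A i j ≠ 0 ↔ G.Adj i j))
    (hneg : (c.darts.map (fun d => A d.toProd.1 d.toProd.2)).prod < 0) :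
    ∃ d : V → ℝ, (∀ i, d i = 1 ∨ d i = -1) ∧
      IsDSO G (Matrix.diagonal d * A * Matrix.diagonal d) := by
  have hAsymm : ∀ i j, A i j = A j i := fun i j => hsymm.apply j i
  have hcycle : c.dartProd (fun i j => negSign (A i j)) = 1 := by
    have := prod_map_negSign_of_odd_of_prod_neg (by simpa using hodd) hneg
    rwa [List.map_map] at this
  obtain ⟨d, hd, hdA⟩ := SimpleGraph.exists_mul_eq_of_adj_of_dartProd_cycle_eq_one hG hcount hc
    (fun i j => by rw [hAsymm]) (fun i j => negSign_mul_self _) hcycle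
  have hentry : ∀ i j, (Matrix.diagonal d * A * Matrix.diagonal d) i j = d i * d j * A i j :=
    fun i j => by simp only [Matrix.mul_diagonal, Matrix.diagonal_mul]; ring
  refine ⟨d, fun i => mul_self_eq_one_iff.mp (hd i), ?_,
    fun i j hij => ⟨fun hadj => ?_, ?_⟩⟩
  · ext i j
    rw [Matrix.transpose_apply, hentry, hentry, hAsymm, mul_comm (d j)]
  · rw [hentry, hdA i j hadj, negSign_mul, neg_lt_zero, abs_pos]
    exact (hsupp i j hij).mpr hadj
  · intro hnadj
    rw [hentry, not_ne_iff.mp (mt (hsupp i j hij).mp hnadj), mul_zero]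

/-- Let `G` be a connected unicyclic graph (number of edges equals number of
vertices) whose unique cycle `c` has odd length, and `A ∈ S(G)`.  Let `p` be the product of the
entries of `A` along the edges of the cycle.  If `p < 0` then `A` is signature similar to a
discrete Schrödinger operator of `G`; if `p > 0` then `−A` is. -/
theorem unicyclic_odd_signature_similarity
    {V : Type*} [Fintype V] [DecidableEq V]
    (G : SimpleGraph V) (hG : G.Connected)
    (hcount : G.edgeSet.ncard = Fintype.card V)
    {v : V} (c : G.Walk v v) (hc : c.IsCycle) (hodd : Odd c.length)
    (A : Matrix V V ℝ) (hsymm : A.IsSymm)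
    (hsupp : ∀ i j : V, i ≠ j → (A i j ≠ 0 ↔ G.Adj i j)) :
    ((c.darts.map (fun d => A d.toProd.1 d.toProd.2)).prod < 0 →
      ∃ d : V → ℝ, (∀ i, d i = 1 ∨ d i = -1) ∧
        IsDSO G (Matrix.diagonal d * A * Matrix.diagonal d)) ∧
    (0 < (c.darts.map (fun d => A d.toProd.1 d.toProd.2)).prod →
      ∃ d : V → ℝ, (∀ i, d i = 1 ∨ d i = -1) ∧
        IsDSO G (Matrix.diagonal d * (-A) * Matrix.diagonal d)) := by
  have of_prod_neg := exists_isDSO_diagonal_mul_mul_diagonal_of_prod_neg G hG hcount c hc hodd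
  refine ⟨of_prod_neg A hsymm hsupp,
    fun hpos => of_prod_neg (-A) hsymm.neg (fun i j hij => by simpa using hsupp i j hij) ?_⟩
  calc (c.darts.map fun d => (-A) d.toProd.1 d.toProd.2).prod
      = ((c.darts.map fun d => A d.toProd.1 d.toProd.2).map Neg.neg).prod := by
        rw [List.map_map]; rfl
    _ = -(c.darts.map fun d => A d.toProd.1 d.toProd.2).prod := by
        rw [List.prod_map_neg, List.length_map, c.length_darts, hodd.neg_one_pow, neg_one_mul]
    _ < 0 := neg_lt_zero.mpr hpos
end

section
/- Let G be a connected unicyclic graph whose cycle has odd length. If a multiset Λ of real numbers is the spectrum of some matrix in S(G) whose largest eigenvalue has multiplicity at least 2, then Λ is the spectrum of some discrete Schrödinger operator of G. -/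
/-- The multiplicity of `μ` as an eigenvalue of `A`. -/
noncomputable def eigMult {V : Type*} [Fintype V] [DecidableEq V]
    (A : Matrix V V ℝ) (μ : ℝ) : ℕ :=
  Module.finrank ℝ ↥(Module.End.eigenspace (Matrix.toLin' A) μ)

/-!
Deleting one edge of the odd cycle leaves a spanning tree, and on a tree every `±1`-signing of the
edges is of the form `s x * s y` for a vertex signing `s`. Twisting the edge signs of `B` by the
sign `ε` of the cycle makes the signing consistent around the cycle as well, because the twist
changes the sign of the cycle by `ε ^ (odd length) = ε`. Hence `M = D B D` with `D = diag s` has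
off-diagonal entries `ε * |B i j|`. If `ε = 1`, then `M` is nonnegative off the diagonal and
irreducible, so by Perron–Frobenius its (and `B`'s) largest eigenvalue is simple, which is
excluded. So `ε = -1`, and `M` is a discrete Schrödinger operator cospectral with `B`.
-/

/-- Note the convention `signUnit 0 = 1`. -/
noncomputable def signUnit (t : ℝ) : ℤˣ := if t < 0 then -1 else 1

lemma signUnit_mul_self (t : ℝ) : ((signUnit t : ℤ) : ℝ) * t = |t| := by
  unfold signUnit
  split_ifs with h
  · simp [abs_of_neg h]
  · simp [abs_of_nonneg (not_lt.mp h)]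

namespace SimpleGraph

variable {V : Type*} {G : SimpleGraph V}

lemma IsAcyclic.eq_concat_or_eq_concat [DecidableEq V] (hG : G.IsAcyclic) {r x y : V}
    {p : G.Walk r x} {q : G.Walk r y} (hp : p.IsPath) (hq : q.IsPath) (h : G.Adj x y) :
    q = p.concat h ∨ p = q.concat h.symm := by
  have := hG.subsingleton_path
  by_cases hy : y ∈ p.support
  · right
    have htake : p.takeUntil y hy = q :=
      congrArg Subtype.val (Subsingleton.elim (⟨_, hp.takeUntil hy⟩ : G.Path r y) ⟨q, hq⟩)
    have hdrop : p.dropUntil y hy = Walk.cons h.symm Walk.nil :=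
      congrArg Subtype.val (Subsingleton.elim (⟨_, hp.dropUntil hy⟩ : G.Path y x)
        ⟨_, Walk.IsPath.nil.cons (by simpa using h.ne')⟩)
    rw [← p.take_spec hy, htake, hdrop, Walk.concat_eq_append]
  · left
    exact congrArg Subtype.val (Subsingleton.elim (⟨q, hq⟩ : G.Path r y) ⟨_, hp.concat hy h⟩)

lemma IsTree.exists_switching (hG : G.IsTree) (σ : Sym2 V → ℤˣ) :
    ∃ s : V → ℤˣ, ∀ x y, G.Adj x y → σ s(x, y) = s x * s y := by
  classical
  obtain ⟨r⟩ := hG.connected.nonempty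
  choose path hpath using fun u => (hG.existsUnique_path r u).exists
  refine ⟨fun u => ((path u).edges.map σ).prod, fun x y h => ?_⟩
  dsimp only
  rcases hG.isAcyclic.eq_concat_or_eq_concat (hpath x) (hpath y) h with hxy | hyx
  · rw [hxy, Walk.edges_concat, List.concat_eq_append, List.map_append, List.prod_append,
      List.map_singleton, List.prod_singleton, ← mul_assoc, Int.units_mul_self, one_mul]
  · rw [hyx, Walk.edges_concat, List.concat_eq_append, List.map_append, List.prod_append,
      List.map_singleton, List.prod_singleton, Sym2.eq_swap, mul_right_comm, Int.units_mul_self,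
      one_mul]

lemma Walk.prod_map_edges_eq_mul {σ : Sym2 V → ℤˣ} {s : V → ℤˣ}
    (hs : ∀ x y, G.Adj x y → σ s(x, y) = s x * s y) {x y : V} (p : G.Walk x y) :
    (p.edges.map σ).prod = s x * s y := by
  induction p with
  | nil => exact (Int.units_mul_self _).symm
  | cons h p ih =>
    rw [Walk.edges_cons, List.map_cons, List.prod_cons, ih, hs _ _ h]
    simp [mul_assoc, ← mul_assoc (s _), Int.units_mul_self]

lemma Connected.isTree_deleteEdges_of_mem_cycle [Finite V] (hG : G.Connected)
    (hcard : G.edgeSet.ncard = Nat.card V) {u : V} {c : G.Walk u u} (hc : c.IsCycle)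
    {x y : V} (he : s(x, y) ∈ c.edges) : (G.deleteEdges {s(x, y)}).IsTree := by
  refine isTree_iff_connected_and_card.mpr
    ⟨hG.connected_delete_edge_of_not_isBridge fun hb => hb.notMem_edges_of_isCycle hc he, ?_⟩
  have hpos : 0 < G.edgeSet.ncard := (Set.ncard_pos G.edgeSet.toFinite).mpr
    ⟨_, c.edges_subset_edgeSet he⟩
  rw [Nat.card_coe_set_eq, edgeSet_deleteEdges,
    Set.ncard_sdiff_singleton_of_mem (c.edges_subset_edgeSet he)]
  omega

lemma Connected.exists_switching_of_odd_cycle [Finite V] (hG : G.Connected)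
    (hcard : G.edgeSet.ncard = Nat.card V) {u : V} {c : G.Walk u u} (hc : c.IsCycle)
    (hodd : Odd c.length) (σ : Sym2 V → ℤˣ) :
    ∃ ε : ℤˣ, ∃ s : V → ℤˣ, ∀ x y, G.Adj x y → s x * s y * σ s(x, y) = ε := by
  obtain ⟨x, h, p, rfl⟩ : ∃ x, ∃ (h : G.Adj u x) (p : G.Walk x u), c = .cons h p := by
    cases c with
    | nil => exact absurd rfl hc.ne_nil
    | cons h p => exact ⟨_, h, p, rfl⟩
  have hT := hG.isTree_deleteEdges_of_mem_cycle (x := u) (y := x) hcard hc (by simp)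
  set ε := σ s(u, x) * (p.edges.map σ).prod
  obtain ⟨s, hs⟩ := hT.exists_switching (fun e => ε * σ e)
  refine ⟨ε, s, fun y z hyz => ?_⟩
  by_cases hT : (G.deleteEdges {s(u, x)}).Adj y z
  · rw [← hs y z hT, mul_assoc, Int.units_mul_self, mul_one]
  -- the twist by `ε` does not change the sign of `p`, whose length is even
  have hp : (p.edges.map σ).prod = s x * s u := by
    have hux : s(u, x) ∉ p.edges := (List.nodup_cons.mp hc.edges_nodup).1
    have hpT : ∀ e ∈ p.edges, e ∈ (G.deleteEdges {s(u, x)}).edgeSet := fun e he => by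
      rw [edgeSet_deleteEdges]
      exact ⟨p.edges_subset_edgeSet he, fun h => hux (h ▸ he)⟩
    obtain ⟨k, hk⟩ : Even p.edges.length := by
      simpa [Nat.odd_add_one] using hodd
    have := Walk.prod_map_edges_eq_mul (σ := fun e => ε * σ e) hs (p.transfer _ hpT)
    rwa [Walk.edges_transfer, List.prod_map_mul, List.map_const', List.prod_replicate, hk,
      ← two_mul, pow_mul, Int.units_sq, one_pow, one_mul] at this
  have hyz : y = u ∧ z = x ∨ y = x ∧ z = u := by
    simp only [deleteEdges_adj, hyz, true_and, Set.mem_singleton_iff, not_not] at hT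
    exact Sym2.eq_iff.mp hT
  rcases hyz with ⟨rfl, rfl⟩ | ⟨rfl, rfl⟩
  · rw [mul_comm (s y), ← hp, mul_comm]
  · rw [← hp, Sym2.eq_swap, mul_comm]

end SimpleGraph

lemma Submodule.finrank_le_one_of_apply_ne_zero {K ι : Type*} [Field K]
    (W : Submodule K (ι → K)) (k : ι) (hW : ∀ x ∈ W, x ≠ 0 → x k ≠ 0) :
    Module.finrank K W ≤ 1 := by
  have hinj :
      Function.Injective (LinearMap.proj (R := K) (φ := fun _ : ι => K) k ∘ₗ W.subtype) := by
    rw [← LinearMap.ker_eq_bot, LinearMap.ker_eq_bot']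
    intro x hx
    by_contra hne
    exact hW x x.2 (by simpa using hne) hx
  simpa using LinearMap.finrank_le_finrank_of_injective hinj

namespace Matrix

variable {n : Type*} [Fintype n] {M : Matrix n n ℝ} {lam : ℝ}

lemma dotProduct_mulVec_le_abs (hM : ∀ i j, i ≠ j → 0 ≤ M i j) (x : n → ℝ) :
    x ⬝ᵥ M *ᵥ x ≤ |x| ⬝ᵥ M *ᵥ |x| := by
  simp only [dotProduct, mulVec, Finset.mul_sum, Pi.abs_apply]
  refine Finset.sum_le_sum fun i _ => Finset.sum_le_sum fun j _ => ?_
  rcases eq_or_ne i j with rfl | hij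
  · exact le_of_eq (by rw [mul_left_comm, ← abs_mul_abs_self (x i)]; ring)
  · rw [mul_left_comm, mul_left_comm |x i|, ← abs_mul]
    exact mul_le_mul_of_nonneg_left (le_abs_self _) (hM i j hij)

lemma eq_zero_of_mulVec_eq_smul_of_apply_eq_zero {G : SimpleGraph n} (hG : G.Preconnected)
    (hM : ∀ i j, i ≠ j → 0 ≤ M i j) (hMG : ∀ i j, G.Adj i j → 0 < M i j)
    {y : n → ℝ} (hy : 0 ≤ y) (hMy : M *ᵥ y = lam • y) {k : n} (hk : y k = 0) : y = 0 := by
  have hstep : ∀ i j, G.Adj i j → y i = 0 → y j = 0 := by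
    intro i j hij hi
    have hrow : ∑ l, M i l * y l = 0 := by simpa [mulVec, dotProduct, hi] using congrFun hMy i
    have hterm : ∀ l ∈ Finset.univ, 0 ≤ M i l * y l := fun l _ => by
      rcases eq_or_ne i l with rfl | hil
      · rw [hi, mul_zero]
      · exact mul_nonneg (hM i l hil) (hy l)
    have := (Finset.sum_eq_zero_iff_of_nonneg hterm).mp hrow j (Finset.mem_univ j)
    exact (mul_eq_zero.mp this).resolve_left (hMG i j hij).ne'
  have hwalk : ∀ a b (p : G.Walk a b), y a = 0 → y b = 0 := by
    intro a b p
    induction p with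
    | nil => exact id
    | cons h _ ih => exact fun ha => ih (hstep _ _ h ha)
  funext i
  obtain ⟨p⟩ := hG k i
  exact hwalk k i p hk

variable [DecidableEq n]

lemma hasEigenvalue_toLin'_iff {R : Type*} [CommRing R] [IsDomain R] (A : Matrix n n R) (μ : R) :
    Module.End.HasEigenvalue (toLin' A) μ ↔ A.charpoly.IsRoot μ := by
  rw [Module.End.hasEigenvalue_iff_isRoot_charpoly, charpoly_toLin']

lemma charpoly_conj_of_mul_self_eq_one {R : Type*} [CommRing R] {D : Matrix n n R}
    (hD : D * D = 1) (B : Matrix n n R) : (D * B * D).charpoly = B.charpoly := by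
  rw [charpoly_mul_comm, ← Matrix.mul_assoc, hD, Matrix.one_mul]

lemma eigMult_le_eigMult_conj {D : Matrix n n ℝ} (hD : D * D = 1) (B : Matrix n n ℝ) (μ : ℝ) :
    eigMult B μ ≤ eigMult (D * B * D) μ := by
  refine (Submodule.finrank_mono fun x hx => ?_).trans
    (Submodule.finrank_map_le (toLin' D) (Module.End.eigenspace (toLin' (D * B * D)) μ))
  rw [Module.End.mem_eigenspace_iff, toLin'_apply] at hx
  refine ⟨D *ᵥ x, ?_, by rw [toLin'_apply, mulVec_mulVec, hD, one_mulVec]⟩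
  rw [SetLike.mem_coe, Module.End.mem_eigenspace_iff, toLin'_apply, mulVec_mulVec,
    Matrix.mul_assoc, hD, Matrix.mul_one, ← mulVec_mulVec, hx, mulVec_smul]

lemma IsSymm.posSemidef_smul_one_sub (hM : M.IsSymm)
    (hmax : ∀ μ, Module.End.HasEigenvalue (toLin' M) μ → μ ≤ lam) :
    (lam • 1 - M).PosSemidef := by
  have hT : (lam • 1 - M).IsHermitian := by
    simpa [isHermitian_iff_isSymm, IsSymm, transpose_sub] using hM
  refine hT.posSemidef_iff_eigenvalues_nonneg.mpr fun i => ?_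
  have hi : hT.eigenvalues i ∈ spectrum ℝ (algebraMap ℝ _ lam - M) := by
    rw [Algebra.algebraMap_eq_smul_one]
    exact hT.eigenvalues_mem_spectrum_real i
  rw [← spectrum.singleton_sub_eq] at hi
  obtain ⟨_, rfl, μ, hμ, hi⟩ := hi
  have := hmax μ (Module.End.hasEigenvalue_iff_mem_spectrum.mpr (by rwa [spectrum_toLin']))
  simp only [Pi.zero_apply]
  linarith

lemma mulVec_abs_eq_smul (hT : (lam • 1 - M).PosSemidef) (hM : ∀ i j, i ≠ j → 0 ≤ M i j)
    {x : n → ℝ} (hx : M *ᵥ x = lam • x) : M *ᵥ |x| = lam • |x| := by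
  have hTmul : ∀ y, (lam • 1 - M) *ᵥ y = lam • y - M *ᵥ y := fun y => by
    rw [sub_mulVec, smul_mulVec, one_mulVec]
  -- `|x|` attains the maximal Rayleigh quotient `lam` as well
  have hquad : |x| ⬝ᵥ (lam • 1 - M) *ᵥ |x| = 0 := by
    refine le_antisymm ?_ (by simpa using hT.dotProduct_mulVec_nonneg |x|)
    have hxx : |x| ⬝ᵥ |x| = x ⬝ᵥ x := by simp [dotProduct, abs_mul_abs_self]
    have hle := dotProduct_mulVec_le_abs hM x
    rw [hx, dotProduct_smul, smul_eq_mul] at hle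
    rw [hTmul, dotProduct_sub, dotProduct_smul, smul_eq_mul, hxx]
    linarith
  have := (hT.dotProduct_mulVec_zero_iff |x|).mp (by simpa using hquad)
  rw [hTmul, sub_eq_zero] at this
  exact this.symm

/-- Perron–Frobenius: an eigenvector for the top eigenvalue may be replaced by its absolute value,
which then vanishes nowhere, so no two such eigenvectors are independent. -/
lemma IsSymm.eigMult_le_one {G : SimpleGraph n} (hG : G.Connected) (hMs : M.IsSymm)
    (hM : ∀ i j, i ≠ j → 0 ≤ M i j) (hMG : ∀ i j, G.Adj i j → 0 < M i j)
    (hmax : ∀ μ, Module.End.HasEigenvalue (toLin' M) μ → μ ≤ lam) :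
    eigMult M lam ≤ 1 := by
  obtain ⟨k⟩ := hG.nonempty
  refine Submodule.finrank_le_one_of_apply_ne_zero _ k fun x hx hx0 hxk => hx0 ?_
  rw [Module.End.mem_eigenspace_iff, toLin'_apply] at hx
  have habs := mulVec_abs_eq_smul (hMs.posSemidef_smul_one_sub hmax) hM hx
  have := eq_zero_of_mulVec_eq_smul_of_apply_eq_zero hG.preconnected hM hMG (abs_nonneg x) habs
    (k := k) (by simp [hxk])
  funext i
  simpa using congrFun this i

end Matrix

section SignDiag

variable {V : Type*} [DecidableEq V]

def signDiag (s : V → ℤˣ) : Matrix V V ℝ := Matrix.diagonal fun i => ((s i : ℤ) : ℝ)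

variable [Fintype V]

lemma signDiag_mul_self (s : V → ℤˣ) : signDiag s * signDiag s = 1 := by
  simp [signDiag, ← Int.cast_mul, ← Units.val_mul, Int.units_mul_self]

variable (s : V → ℤˣ) {B : Matrix V V ℝ}

lemma signDiag_conj_apply (i j : V) :
    (signDiag s * B * signDiag s) i j = (s i : ℤ) * B i j * (s j : ℤ) := by
  simp [signDiag]

lemma Matrix.IsSymm.signDiag_conj (hB : B.IsSymm) : (signDiag s * B * signDiag s).IsSymm :=
  Matrix.IsSymm.ext fun i j => by simp only [signDiag_conj_apply, hB.apply i j]; ring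

lemma signDiag_conj_apply_eq_mul_abs {G : SimpleGraph V}
    (hsupp : ∀ i j : V, i ≠ j → (B i j ≠ 0 ↔ G.Adj i j)) {ε : ℤˣ}
    (hs : ∀ x y, G.Adj x y → s x * s y * signUnit (B x y) = ε) {i j : V} (hij : i ≠ j) :
    (signDiag s * B * signDiag s) i j = ε * |B i j| := by
  by_cases hadj : G.Adj i j
  · have hε := congrArg (fun u : ℤˣ => ((u : ℤ) : ℝ)) (hs i j hadj)
    have hσσ := congrArg (fun u : ℤˣ => ((u : ℤ) : ℝ)) (Int.units_mul_self (signUnit (B i j)))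
    simp only [Units.val_mul, Int.cast_mul, Units.val_one, Int.cast_one] at hε hσσ
    rw [signDiag_conj_apply, ← signUnit_mul_self, ← hε]
    linear_combination (-(((s i : ℤ) : ℝ) * B i j * ((s j : ℤ) : ℝ))) * hσσ
  · have hB : B i j = 0 := not_not.mp fun h => hadj ((hsupp i j hij).mp h)
    simp [signDiag_conj_apply, hB]

end SignDiag

theorem unicyclic_odd_spectrum_with_multiple_largest_general
    {V : Type*} [Fintype V] [DecidableEq V]
    (G : SimpleGraph V) (hG : G.Connected)
    (hcount : G.edgeSet.ncard = Fintype.card V)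
    {v : V} (c : G.Walk v v) (hc : c.IsCycle) (hodd : Odd c.length)
    (B : Matrix V V ℝ) (hsymm : B.IsSymm)
    (hsupp : ∀ i j : V, i ≠ j → (B i j ≠ 0 ↔ G.Adj i j))
    (lam : ℝ)
    (hmax : ∀ μ : ℝ, Module.End.HasEigenvalue (Matrix.toLin' B) μ → μ ≤ lam)
    (hmult : 2 ≤ eigMult B lam) :
    ∃ A : Matrix V V ℝ, IsDSO G A ∧ A.charpoly = B.charpoly := by
  obtain ⟨ε, s, hs⟩ := hG.exists_switching_of_odd_cycle (by rwa [Nat.card_eq_fintype_card]) hc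
    hodd (Sym2.lift ⟨fun i j => signUnit (B i j), fun i j => by simp only [hsymm.apply i j]⟩)
  set M := signDiag s * B * signDiag s
  have hM : ∀ i j, i ≠ j → M i j = ε * |B i j| := fun i j =>
    signDiag_conj_apply_eq_mul_abs s hsupp hs
  have hchar : M.charpoly = B.charpoly :=
    Matrix.charpoly_conj_of_mul_self_eq_one (signDiag_mul_self s) B
  rcases Int.units_eq_one_or ε with rfl | rfl
  · have hMmax : ∀ μ, Module.End.HasEigenvalue (Matrix.toLin' M) μ → μ ≤ lam := fun μ hμ => hmax μ
      (by rwa [Matrix.hasEigenvalue_toLin'_iff, ← hchar, ← Matrix.hasEigenvalue_toLin'_iff])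
    have hsimple : eigMult M lam ≤ 1 := (hsymm.signDiag_conj s).eigMult_le_one hG
      (fun i j hij => by rw [hM i j hij]; simp)
      (fun i j hij => by rw [hM i j hij.ne]; simpa using (hsupp i j hij.ne).mpr hij) hMmax
    have := (Matrix.eigMult_le_eigMult_conj (signDiag_mul_self s) B lam).trans hsimple
    omega
  · refine ⟨M, ⟨hsymm.signDiag_conj s, fun i j hij => ⟨fun hadj => ?_, fun hadj => ?_⟩⟩, hchar⟩
    · simpa [hM i j hij] using (hsupp i j hij).mpr hadj
    · simpa [hM i j hij] using fun h => hadj ((hsupp i j hij).mp h)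

/-- Let `G` be a connected unicyclic graph whose unique cycle has odd length.
If a spectrum is realized by some `B ∈ S(G)` whose largest eigenvalue has multiplicity at least
`2`, then the same spectrum is realized by a discrete Schrödinger operator of `G`. -/
theorem unicyclic_odd_spectrum_with_multiple_largest
    {V : Type*} [Fintype V] [DecidableEq V]
    (G : SimpleGraph V) (hG : G.Connected)
    (hcount : G.edgeSet.ncard = Fintype.card V)
    {v : V} (c : G.Walk v v) (hc : c.IsCycle) (hodd : Odd c.length)
    (B : Matrix V V ℝ) (hsymm : B.IsSymm)
    (hsupp : ∀ i j : V, i ≠ j → (B i j ≠ 0 ↔ G.Adj i j))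
    (lam : ℝ) (hlam : Module.End.HasEigenvalue (Matrix.toLin' B) lam)
    (hmax : ∀ μ : ℝ, Module.End.HasEigenvalue (Matrix.toLin' B) μ → μ ≤ lam)
    (hmult : 2 ≤ eigMult B lam) :
    ∃ A : Matrix V V ℝ, IsDSO G A ∧ A.charpoly = B.charpoly :=
  unicyclic_odd_spectrum_with_multiple_largest_general G hG hcount c hc hodd B hsymm hsupp lam hmax
    hmult
end

section
/- Let G be a connected graph, v a cut-vertex of G, A a discrete Schrödinger operator of G, and H a connected component of G − v. If λ is the smallest eigenvalue of the principal submatrix A[H], then mult_{A(v)}(λ) = mult_A(λ) + 1, i.e., v is a λ-upper vertex of A. -/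
/-!
By Perron–Frobenius, the smallest eigenvalue `λ` of `A[H]` has a positive eigenvector `u`.
No edge leaves `H` except towards `v`, so extending `u` by zero gives a `λ`-eigenvector `z` of
`A(v)`, and `⟨A[v, ·], z⟩ < 0` because `v` has a neighbour in `H`. Pairing the equations of
`A x = λ x` away from `v` with `z` shows that every `λ`-eigenvector `x` of the symmetric matrix `A`
vanishes at `v`. Hence extension by zero identifies the `λ`-eigenspace of `A` with the hyperplane
`⟨A[v, ·], ·⟩ = 0` of the `λ`-eigenspace of `A(v)`, which `z` does not lie in.
-/

open Matrix Module.End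

theorem SimpleGraph.Preconnected.exists_adj_of_mem_of_notMem {V : Type*} {G : SimpleGraph V}
    (hG : G.Preconnected) {S : Set V} {a b : V} (ha : a ∈ S) (hb : b ∉ S) :
    ∃ i ∈ S, ∃ j ∉ S, G.Adj i j := by
  obtain ⟨p⟩ := hG a b
  obtain ⟨d, -, hd₁, hd₂⟩ := p.exists_boundary_dart S ha hb
  exact ⟨d.fst, hd₁, d.snd, hd₂, d.adj⟩

section ExtendByZero

variable {ι κ R : Type*} [Fintype ι] [Fintype κ] [NonUnitalNonAssocSemiring R] {e : κ → ι}

theorem dotProduct_extend_zero (he : e.Injective) (x : ι → R) (y : κ → R) :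
    x ⬝ᵥ Function.extend e y 0 = (x ∘ e) ⬝ᵥ y := by
  refine (Fintype.sum_of_injective e he _ _ (fun i hi => ?_) fun k => ?_).symm
  · rw [Function.extend_apply' _ _ _ hi, Pi.zero_apply, mul_zero]
  · rw [he.extend_apply, Function.comp_apply]

theorem mulVec_extend_zero (he : e.Injective) (M : Matrix ι ι R) (y : κ → R) :
    M *ᵥ Function.extend e y 0 = M.submatrix id e *ᵥ y :=
  funext fun i => dotProduct_extend_zero he (M i) y

theorem mulVec_extend_zero_eq_smul (he : e.Injective) {M : Matrix ι ι R}
    (hM : ∀ i ∉ Set.range e, ∀ k, M i (e k) = 0) {μ : R} {y : κ → R}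
    (hy : M.submatrix e e *ᵥ y = μ • y) :
    M *ᵥ Function.extend e y 0 = μ • Function.extend e y 0 := by
  rw [mulVec_extend_zero he]
  funext i
  by_cases hi : i ∈ Set.range e
  · obtain ⟨k, rfl⟩ := hi
    rw [Pi.smul_apply, he.extend_apply]
    exact congrFun hy k
  · simp [Function.extend_apply' _ _ _ hi, mulVec, dotProduct, hM i hi]

end ExtendByZero

section PerronFrobenius

variable {ι : Type*} [Fintype ι] {M : Matrix ι ι ℝ}

theorem IsDSO.apply_nonpos {G : SimpleGraph ι} (hM : IsDSO G M) {i j : ι} (hij : i ≠ j) :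
    M i j ≤ 0 := by
  by_cases h : G.Adj i j
  · exact ((hM.2 i j hij).1 h).le
  · exact ((hM.2 i j hij).2 h).le

theorem IsDSO.induce {V : Type*} [Fintype V] {G : SimpleGraph V} {A : Matrix V V ℝ}
    (hA : IsDSO G A) (S : Set V) [Fintype S] :
    IsDSO (G.induce S) (A.submatrix Subtype.val Subtype.val) :=
  ⟨hA.1.submatrix _, fun i j hij => hA.2 i j (Subtype.val_injective.ne hij)⟩

theorem Matrix.IsSymm.posSemidef_sub_smul_one [DecidableEq ι] (hM : M.IsSymm) {lam : ℝ}
    (hmin : ∀ μ, HasEigenvalue (toLin' M) μ → lam ≤ μ) : (M - lam • 1).PosSemidef := by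
  have hN : (M - lam • 1).IsHermitian := by
    simpa [isHermitian_iff_isSymm] using hM.sub (isSymm_one.smul lam)
  refine hN.posSemidef_iff_eigenvalues_nonneg.mpr fun i => ?_
  show 0 ≤ hN.eigenvalues i
  have hw : ⇑(hN.eigenvectorBasis i) ≠ 0 := fun h =>
    hN.eigenvectorBasis.orthonormal.ne_zero i ((WithLp.ofLp_eq_zero 2).1 h)
  have hMw : toLin' M (hN.eigenvectorBasis i) =
      (hN.eigenvalues i + lam) • ⇑(hN.eigenvectorBasis i) := by
    have := hN.mulVec_eigenvectorBasis i
    rw [sub_mulVec, smul_mulVec, one_mulVec] at this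
    rw [toLin'_apply, add_smul, ← this, sub_add_cancel]
  linarith [hmin _ (hasEigenvalue_of_hasEigenvector ⟨mem_eigenspace_iff.2 hMw, hw⟩)]

/-- Nonpositive off-diagonal entries make the quadratic form no larger at `|x|` than at `x`;
positive semidefiniteness then forces equality. -/
theorem Matrix.PosSemidef.mulVec_abs_eq_zero_s12 {N : Matrix ι ι ℝ} (hN : N.PosSemidef)
    (hoff : ∀ i j, i ≠ j → N i j ≤ 0) {x : ι → ℝ} (hx : N *ᵥ x = 0) : N *ᵥ |x| = 0 := by
  have hle : |x| ⬝ᵥ N *ᵥ |x| ≤ x ⬝ᵥ N *ᵥ x := by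
    simp only [dotProduct, mulVec, Finset.mul_sum]
    refine Finset.sum_le_sum fun i _ => Finset.sum_le_sum fun j _ => ?_
    rcases eq_or_ne i j with rfl | hij
    · simp only [Pi.abs_apply]
      rw [mul_left_comm, abs_mul_abs_self, mul_left_comm]
    · have := mul_le_mul_of_nonpos_left (le_abs_self (x i * x j)) (hoff i j hij)
      rw [abs_mul] at this
      simp only [Pi.abs_apply]; nlinarith
  have hge := hN.dotProduct_mulVec_nonneg |x|
  rw [hx, dotProduct_zero] at hle
  rw [star_trivial] at hge
  exact (hN.dotProduct_mulVec_zero_iff |x|).1 (by rw [star_trivial]; linarith)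

theorem IsDSO.dotProduct_row_neg {G : SimpleGraph ι} (hM : IsDSO G M) {κ : Type*} [Fintype κ]
    {e : κ → ι} {v : ι} (hv : ∀ k, e k ≠ v) {u : κ → ℝ} (hu : ∀ k, 0 < u k) {k₀ : κ}
    (hk₀ : G.Adj v (e k₀)) : (fun k => M v (e k)) ⬝ᵥ u < 0 :=
  calc ∑ k, M v (e k) * u k
      < ∑ _ : κ, (0 : ℝ) := Finset.sum_lt_sum
        (fun k _ => mul_nonpos_of_nonpos_of_nonneg (hM.apply_nonpos (hv k).symm) (hu k).le)
        ⟨k₀, Finset.mem_univ _, mul_neg_of_neg_of_pos ((hM.2 _ _ (hv k₀).symm).1 hk₀) (hu k₀)⟩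
    _ = 0 := Finset.sum_const_zero

theorem IsDSO.pos_of_mulVec_eq_smul {G : SimpleGraph ι} (hM : IsDSO G M) (hG : G.Preconnected)
    {μ : ℝ} {y : ι → ℝ} (hy : M *ᵥ y = μ • y) (hnn : 0 ≤ y) (hne : y ≠ 0) (i : ι) :
    0 < y i := by
  have hzero : ∀ a b, G.Adj a b → y a = 0 → y b = 0 := by
    intro a b hab ha
    have hrow : ∑ k, M a k * y k = 0 := by
      simpa [mulVec, dotProduct, ha] using congrFun hy a
    have hterms : (fun k => M a k * y k) ≤ 0 := fun k => by
      rcases eq_or_ne a k with rfl | hak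
      · simp [ha]
      · exact mul_nonpos_of_nonpos_of_nonneg (hM.apply_nonpos hak) (hnn k)
    have := congrFun ((Fintype.sum_eq_zero_iff_of_nonpos hterms).1 hrow) b
    exact (mul_eq_zero.1 this).resolve_left ((hM.2 a b hab.ne).1 hab).ne
  by_contra hi
  have hi : y i = 0 := le_antisymm (not_lt.1 hi) (hnn i)
  obtain ⟨j, hj⟩ := Function.ne_iff.1 hne
  obtain ⟨a, ha, b, hb, hab⟩ :=
    hG.exists_adj_of_mem_of_notMem (S := {k | y k = 0}) hi hj
  exact hb (hzero a b hab ha)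

theorem IsDSO.exists_pos_eigenvector [DecidableEq ι] {G : SimpleGraph ι} (hM : IsDSO G M)
    (hG : G.Preconnected) {lam : ℝ} (hev : HasEigenvalue (toLin' M) lam)
    (hmin : ∀ μ, HasEigenvalue (toLin' M) μ → lam ≤ μ) :
    ∃ u : ι → ℝ, (∀ i, 0 < u i) ∧ M *ᵥ u = lam • u := by
  have hker : ∀ z : ι → ℝ, M *ᵥ z = lam • z ↔ (M - lam • 1) *ᵥ z = 0 := fun z => by
    rw [sub_mulVec, smul_mulVec, one_mulVec, sub_eq_zero]
  obtain ⟨x, hx, hx0⟩ := hev.exists_hasEigenvector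
  rw [mem_eigenspace_iff, toLin'_apply, hker] at hx
  have habs : M *ᵥ |x| = lam • |x| :=
    (hker _).2 <| (hM.1.posSemidef_sub_smul_one hmin).mulVec_abs_eq_zero_s12
      (fun i j hij => by simpa [one_apply_ne hij] using hM.apply_nonpos hij) hx
  have habs0 : |x| ≠ 0 := fun h => hx0 (funext fun i => abs_eq_zero.1 (congrFun h i))
  exact ⟨|x|, hM.pos_of_mulVec_eq_smul hG habs (abs_nonneg x) habs0, habs⟩

end PerronFrobenius

theorem Submodule.finrank_inf_ker_add_one {K W : Type*} [Field K] [AddCommGroup W] [Module K W]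
    [FiniteDimensional K W] {p : Submodule K W} {f : Module.Dual K W} {z : W} (hz : z ∈ p)
    (hfz : f z ≠ 0) : Module.finrank K ↥(p ⊓ LinearMap.ker f) + 1 = Module.finrank K p := by
  have hf : f.domRestrict p ≠ 0 := fun h => hfz (LinearMap.congr_fun h ⟨z, hz⟩)
  rw [← Module.Dual.finrank_ker_add_one_of_ne_zero hf, LinearMap.ker_domRestrict,
    ← Submodule.map_comap_subtype, Submodule.finrank_map_subtype_eq]

/-- The paper's `A(v)`. -/
abbrev Matrix.deleteRowCol {V : Type*} (A : Matrix V V ℝ) (v : V) :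
    Matrix {x // x ≠ v} {x // x ≠ v} ℝ :=
  A.submatrix Subtype.val Subtype.val

def IsUpperVertex {V : Type*} [Fintype V] [DecidableEq V] (A : Matrix V V ℝ) (v : V) (lam : ℝ) :
    Prop :=
  eigMult (A.deleteRowCol v) lam = eigMult A lam + 1

section VertexDeletion

variable {V : Type*} [Fintype V] [DecidableEq V] {A : Matrix V V ℝ} {v : V} {lam : ℝ}

theorem mulVec_apply_subtype_ne (x : V → ℝ) (w : {x // x ≠ v}) :
    (A *ᵥ x) w = (A.deleteRowCol v *ᵥ (x ∘ Subtype.val)) w + A w v * x v := by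
  rw [mulVec, dotProduct, Fintype.sum_eq_add_sum_subtype_ne _ v, add_comm]
  rfl

theorem mulVec_extend_zero_eq_smul_iff {y : {x // x ≠ v} → ℝ} :
    A *ᵥ Function.extend Subtype.val y 0 = lam • Function.extend Subtype.val y 0 ↔
      A.deleteRowCol v *ᵥ y = lam • y ∧
        (fun w : {x // x ≠ v} => A v w) ⬝ᵥ y = 0 := by
  have hv : Function.extend Subtype.val y 0 v = 0 :=
    Function.extend_apply' _ _ _ fun ⟨w, hw⟩ => w.2 hw
  have hw (w : {x // x ≠ v}) : Function.extend Subtype.val y 0 w = y w :=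
    Subtype.val_injective.extend_apply _ _ _
  rw [mulVec_extend_zero Subtype.val_injective]
  constructor
  · intro h
    refine ⟨funext fun w => ?_, ?_⟩
    · have := congrFun h w
      rwa [Pi.smul_apply, hw] at this
    · have := congrFun h v
      rwa [Pi.smul_apply, hv, smul_zero] at this
  · rintro ⟨hy, hvy⟩
    funext i
    by_cases hi : i = v
    · subst hi
      rw [Pi.smul_apply, hv, smul_zero]
      exact hvy
    · rw [Pi.smul_apply, hw ⟨i, hi⟩]
      exact congrFun hy ⟨i, hi⟩

theorem apply_eq_zero_of_mulVec_eq_smul (hA : A.IsSymm) {z : {x // x ≠ v} → ℝ}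
    (hz : A.deleteRowCol v *ᵥ z = lam • z)
    (hvz : (fun w : {x // x ≠ v} => A v w) ⬝ᵥ z ≠ 0) {x : V → ℝ} (hx : A *ᵥ x = lam • x) :
    x v = 0 := by
  have hrows : A.deleteRowCol v *ᵥ (x ∘ Subtype.val) + x v • (fun w : {x // x ≠ v} => A v w) =
      lam • (x ∘ Subtype.val) := by
    funext w
    have := mulVec_apply_subtype_ne (A := A) x w
    rw [hx, hA.apply v w, Pi.smul_apply, smul_eq_mul] at this
    simp only [Pi.add_apply, Pi.smul_apply, smul_eq_mul, Function.comp_apply]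
    linarith
  have hpair := congrArg (z ⬝ᵥ ·) hrows
  rw [dotProduct_add, dotProduct_mulVec, ← mulVec_transpose, (hA.submatrix _).eq, hz,
    dotProduct_smul, dotProduct_smul, smul_dotProduct, smul_eq_mul, smul_eq_mul,
    add_eq_left] at hpair
  rw [dotProduct_comm] at hvz
  exact (mul_eq_zero.1 hpair).resolve_right hvz

theorem eigenspace_eq_map_extend_zero (hA : A.IsSymm) {z : {x // x ≠ v} → ℝ}
    (hz : A.deleteRowCol v *ᵥ z = lam • z)
    (hvz : (fun w : {x // x ≠ v} => A v w) ⬝ᵥ z ≠ 0) :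
    eigenspace (toLin' A) lam =
      (eigenspace (toLin' (A.deleteRowCol v)) lam ⊓
        LinearMap.ker (dotProductBilin ℝ ℝ (fun w : {x // x ≠ v} => A v w))).map
        (Function.ExtendByZero.linearMap ℝ Subtype.val) := by
  ext x
  simp only [Submodule.mem_map, Submodule.mem_inf, LinearMap.mem_ker, mem_eigenspace_iff,
    toLin'_apply, dotProductBilin_apply_apply]
  constructor
  · intro hx
    have hxv := apply_eq_zero_of_mulVec_eq_smul hA hz hvz hx
    have hext : Function.extend (Subtype.val : {x // x ≠ v} → V) (x ∘ Subtype.val) 0 = x := by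
      funext i
      by_cases hi : i = v
      · subst hi
        exact (Function.extend_apply' _ _ _ fun ⟨w, hw⟩ => w.2 hw).trans hxv.symm
      · exact Subtype.val_injective.extend_apply (x ∘ Subtype.val) 0 ⟨i, hi⟩
    rw [← hext] at hx
    exact ⟨_, mulVec_extend_zero_eq_smul_iff.1 hx, hext⟩
  · rintro ⟨y, hy, rfl⟩
    exact mulVec_extend_zero_eq_smul_iff.2 hy

theorem isUpperVertex_of_dotProduct_ne_zero (hA : A.IsSymm) {z : {x // x ≠ v} → ℝ}
    (hz : A.deleteRowCol v *ᵥ z = lam • z)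
    (hvz : (fun w : {x // x ≠ v} => A v w) ⬝ᵥ z ≠ 0) : IsUpperVertex A v lam := by
  have hinj : Function.Injective
      (Function.ExtendByZero.linearMap ℝ (Subtype.val : {x // x ≠ v} → V)) :=
    Function.extend_injective Subtype.val_injective (0 : V → ℝ)
  rw [IsUpperVertex, eigMult, eigMult, eigenspace_eq_map_extend_zero hA hz hvz,
    ← (Submodule.equivMapOfInjective _ hinj _).finrank_eq,
    Submodule.finrank_inf_ker_add_one (mem_eigenspace_iff.2 hz) hvz]

end VertexDeletion

theorem cut_vertex_upper_at_component_min_general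
    {V : Type*} [Fintype V] [DecidableEq V]
    (G : SimpleGraph V) (hG : G.Connected) (v : V)
    (A : Matrix V V ℝ) (hA : IsDSO G A)
    (s : Finset V) (hvs : v ∉ s) (hne : s.Nonempty)
    (hHconn : (G.induce (↑s : Set V)).Connected)
    (hclosed : ∀ i ∈ s, ∀ j : V, j ∉ s → j ≠ v → ¬ G.Adj i j)
    (lam : ℝ)
    (hev : Module.End.HasEigenvalue
      (Matrix.toLin' (A.submatrix (fun i : {x // x ∈ s} => (i : V))
        (fun i : {x // x ∈ s} => (i : V)))) lam)
    (hmin : ∀ μ : ℝ, Module.End.HasEigenvalue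
      (Matrix.toLin' (A.submatrix (fun i : {x // x ∈ s} => (i : V))
        (fun i : {x // x ∈ s} => (i : V)))) μ → lam ≤ μ) :
    eigMult (A.submatrix (fun i : {x // x ≠ v} => (i : V))
        (fun i : {x // x ≠ v} => (i : V))) lam
      = eigMult A lam + 1 := by
  obtain ⟨u, hu_pos, hu⟩ :=
    (hA.induce (s : Set V)).exists_pos_eigenvector hHconn.preconnected hev hmin
  obtain ⟨i, hi, w, hw, hiw⟩ :=
    hG.preconnected.exists_adj_of_mem_of_notMem (S := (s : Set V)) hne.choose_spec hvs
  obtain rfl : v = w := by_contra fun hwv => hclosed i hi w hw (Ne.symm hwv) hiw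
  have hsv (k : {x // x ∈ s}) : (k : V) ≠ v := ne_of_mem_of_not_mem k.2 hvs
  let e : {x // x ∈ s} → {x // x ≠ v} := fun k => ⟨k, hsv k⟩
  have he : e.Injective := fun a b h => Subtype.ext (congrArg (Subtype.val : {x // x ≠ v} → V) h)
  refine isUpperVertex_of_dotProduct_ne_zero hA.1 (z := Function.extend e u 0) ?_ ?_
  · refine mulVec_extend_zero_eq_smul he (fun x hx k => ?_) hu
    have hxs : (x : V) ∉ s := fun h => hx ⟨⟨x, h⟩, rfl⟩
    exact (hA.2 x k fun h => hxs (h ▸ k.2)).2 fun h => hclosed k k.2 x hxs x.2 h.symm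
  · rw [dotProduct_extend_zero he]
    exact (hA.dotProduct_row_neg hsv hu_pos (k₀ := ⟨i, hi⟩) hiw.symm).ne

/-- Let `G` be connected, `v` a cut-vertex, `A` a discrete Schrödinger
operator of `G`, and `s` the vertex set of a connected component `H` of `G − v`.  If `λ` is the
smallest eigenvalue of the principal submatrix `A[H]`, then `v` is a `λ`-upper vertex:
`mult_{A(v)}(λ) = mult_A(λ) + 1`. -/
theorem cut_vertex_upper_at_component_min
    {V : Type*} [Fintype V] [DecidableEq V]
    (G : SimpleGraph V) (hG : G.Connected) (v : V)
    (hcut : ¬ (G.induce ({v}ᶜ : Set V)).Connected)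
    (A : Matrix V V ℝ) (hA : IsDSO G A)
    (s : Finset V) (hvs : v ∉ s) (hne : s.Nonempty)
    (hHconn : (G.induce (↑s : Set V)).Connected)
    (hclosed : ∀ i ∈ s, ∀ j : V, j ∉ s → j ≠ v → ¬ G.Adj i j)
    (lam : ℝ)
    (hev : Module.End.HasEigenvalue
      (Matrix.toLin' (A.submatrix (fun i : {x // x ∈ s} => (i : V))
        (fun i : {x // x ∈ s} => (i : V)))) lam)
    (hmin : ∀ μ : ℝ, Module.End.HasEigenvalue
      (Matrix.toLin' (A.submatrix (fun i : {x // x ∈ s} => (i : V))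
        (fun i : {x // x ∈ s} => (i : V)))) μ → lam ≤ μ) :
    eigMult (A.submatrix (fun i : {x // x ≠ v} => (i : V))
        (fun i : {x // x ≠ v} => (i : V))) lam
      = eigMult A lam + 1 :=
  cut_vertex_upper_at_component_min_general G hG v A hA s hvs hne hHconn hclosed lam hev hmin
end

section
/- Let G be a connected graph, v a cut-vertex of G, A a discrete Schrödinger operator of G, and H a connected component of G − v. If for every eigenvalue λ of A[H] other than its smallest, the vector A[H, v] lies in the column space of A[H] − λI, then A[H, v] is entrywise negative; in particular v is adjacent to every vertex of H. -/
open Matrix Module End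

namespace SimpleGraph

variable {V : Type*} {G : SimpleGraph V}

theorem Preconnected.exists_adj_mem_notMem (hG : G.Preconnected) {s : Set V} {a b : V}
    (ha : a ∈ s) (hb : b ∉ s) : ∃ x ∈ s, ∃ y ∉ s, G.Adj x y := by
  obtain ⟨p⟩ := hG a b
  obtain ⟨d, -, hd₁, hd₂⟩ := p.exists_boundary_dart s ha hb
  exact ⟨_, hd₁, _, hd₂, d.adj⟩

theorem Preconnected.forall_of_forall_adj_imp (hG : G.Preconnected) {P : V → Prop}
    (hP : ∀ x y, G.Adj x y → P x → P y) {a : V} (ha : P a) (b : V) : P b := by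
  by_contra hb
  obtain ⟨x, hx, y, hy, hxy⟩ := hG.exists_adj_mem_notMem (s := {x | P x}) ha hb
  exact hy (hP x y hxy hx)

end SimpleGraph

namespace Matrix

variable {n : Type*} [Fintype n]

theorem IsSymm.dotProduct_sub_smul_one_mulVec_eq_zero {R : Type*} [CommRing R] [DecidableEq n]
    {B : Matrix n n R} (hB : B.IsSymm) {u : n → R} {l : R} (hu : B *ᵥ u = l • u) (x : n → R) :
    u ⬝ᵥ (B - l • 1) *ᵥ x = 0 := by
  rw [dotProduct_mulVec, ← mulVec_transpose, transpose_sub, hB.eq, transpose_smul, transpose_one,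
    sub_mulVec, smul_mulVec, one_mulVec, hu, sub_self, zero_dotProduct]

theorem eq_zero_of_mulVec_eq_smul_of_apply_neg {B : Matrix n n ℝ} {c : n → ℝ} {μ : ℝ}
    (hB : ∀ i j, i ≠ j → B i j ≤ 0) (hc : ∀ i, c i ≤ 0) (hBc : B *ᵥ c = μ • c) {i j : n}
    (hji : B j i < 0) (hj : c j = 0) : c i = 0 := by
  have hterm : ∀ k ∈ Finset.univ, 0 ≤ B j k * c k := by
    intro k _
    rcases eq_or_ne j k with rfl | hjk
    · rw [hj, mul_zero]
    · exact mul_nonneg_of_nonpos_of_nonpos (hB j k hjk) (hc k)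
  have hsum : ∑ k, B j k * c k = 0 := by
    simpa [mulVec, dotProduct, hj] using congrFun hBc j
  have := (Finset.sum_eq_zero_iff_of_nonneg hterm).1 hsum i (Finset.mem_univ i)
  exact (mul_eq_zero.1 this).resolve_left hji.ne

variable [DecidableEq n] {B : Matrix n n ℝ}

theorem IsHermitian.hasEigenvalue_toLin'_iff (hB : B.IsHermitian) {μ : ℝ} :
    HasEigenvalue (toLin' B) μ ↔ μ ∈ Set.range hB.eigenvalues := by
  rw [hasEigenvalue_iff_mem_spectrum, spectrum_toLin', hB.spectrum_real_eq_range_eigenvalues]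

theorem IsHermitian.exists_hasEigenvalue_forall_le [Nonempty n] (hB : B.IsHermitian) :
    ∃ μ, HasEigenvalue (toLin' B) μ ∧ ∀ l, HasEigenvalue (toLin' B) l → μ ≤ l := by
  obtain ⟨i, -, hi⟩ := Finset.exists_min_image Finset.univ hB.eigenvalues Finset.univ_nonempty
  refine ⟨hB.eigenvalues i, hB.hasEigenvalue_toLin'_iff.2 ⟨i, rfl⟩, fun l hl => ?_⟩
  obtain ⟨j, rfl⟩ := hB.hasEigenvalue_toLin'_iff.1 hl
  exact hi j (Finset.mem_univ j)

theorem IsHermitian.eq_zero_of_forall_eigenvectorBasis_dotProduct_eq_zero (hB : B.IsHermitian)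
    {w : n → ℝ} (hw : ∀ i, ⇑(hB.eigenvectorBasis i) ⬝ᵥ w = 0) : w = 0 := by
  have : hB.eigenvectorBasis.repr (WithLp.toLp 2 w) = 0 := by
    ext i
    rw [OrthonormalBasis.repr_apply_apply, EuclideanSpace.inner_eq_star_dotProduct, star_trivial,
      dotProduct_comm]
    exact hw i
  simpa using this

theorem IsHermitian.mulVec_eq_smul_of_forall_exists_mulVec_eq (hB : B.IsHermitian) {c : n → ℝ}
    {μ : ℝ} (hc : ∀ l, HasEigenvalue (toLin' B) l → l ≠ μ → ∃ x, (B - l • 1) *ᵥ x = c) :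
    B *ᵥ c = μ • c := by
  rw [← sub_eq_zero]
  refine hB.eq_zero_of_forall_eigenvectorBasis_dotProduct_eq_zero fun i => ?_
  set u := ⇑(hB.eigenvectorBasis i)
  have hu : B *ᵥ u = hB.eigenvalues i • u := hB.mulVec_eigenvectorBasis i
  have hBsymm : B.IsSymm := isHermitian_iff_isSymm.1 hB
  have hBu : u ⬝ᵥ B *ᵥ c = hB.eigenvalues i * (u ⬝ᵥ c) := by
    rw [dotProduct_mulVec, ← mulVec_transpose, hBsymm.eq, hu, smul_dotProduct, smul_eq_mul]
  rw [dotProduct_sub, hBu, dotProduct_smul, smul_eq_mul, ← sub_mul]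
  by_cases hi : hB.eigenvalues i = μ
  · rw [hi, sub_self, zero_mul]
  · obtain ⟨x, rfl⟩ := hc _ (hB.hasEigenvalue_toLin'_iff.2 ⟨i, rfl⟩) hi
    rw [hBsymm.dotProduct_sub_smul_one_mulVec_eq_zero hu, mul_zero]

end Matrix

namespace IsDSO

variable {V : Type*} [Fintype V] {G : SimpleGraph V} {A : Matrix V V ℝ}

theorem apply_nonpos_s13 (hA : IsDSO G A) {i j : V} (hij : i ≠ j) : A i j ≤ 0 := by
  by_cases h : G.Adj i j
  · exact ((hA.2 i j hij).1 h).le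
  · exact ((hA.2 i j hij).2 h).le

theorem apply_neg (hA : IsDSO G A) {i j : V} (h : G.Adj i j) : A i j < 0 :=
  (hA.2 i j h.ne).1 h

theorem adj_of_apply_ne_zero (hA : IsDSO G A) {i j : V} (hij : i ≠ j) (h : A i j ≠ 0) :
    G.Adj i j :=
  not_not.1 fun hn => h ((hA.2 i j hij).2 hn)

end IsDSO

theorem cut_vertex_fully_joined_component_general
    {V : Type*} [Fintype V] [DecidableEq V]
    (G : SimpleGraph V) (hG : G.Connected) (v : V)
    (A : Matrix V V ℝ) (hA : IsDSO G A)
    (s : Finset V) (hvs : v ∉ s) (hne : s.Nonempty)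
    (hHconn : (G.induce (↑s : Set V)).Connected)
    (hclosed : ∀ i ∈ s, ∀ j : V, j ∉ s → j ≠ v → ¬ G.Adj i j)
    (hcol : ∀ lam : ℝ,
      Module.End.HasEigenvalue
        (Matrix.toLin' (A.submatrix (fun i : {x // x ∈ s} => (i : V))
          (fun i : {x // x ∈ s} => (i : V)))) lam →
      (∃ μ : ℝ, Module.End.HasEigenvalue
        (Matrix.toLin' (A.submatrix (fun i : {x // x ∈ s} => (i : V))
          (fun i : {x // x ∈ s} => (i : V)))) μ ∧ μ < lam) →
      ∃ x : {x // x ∈ s} → ℝ,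
        (A.submatrix (fun i : {x // x ∈ s} => (i : V))
            (fun i : {x // x ∈ s} => (i : V)) - lam • (1 : Matrix _ _ ℝ)).mulVec x
          = fun i : {x // x ∈ s} => A (i : V) v) :
    ∀ i ∈ s, A i v < 0 ∧ G.Adj v i := by
  have hsv : ∀ i ∈ s, i ≠ v := fun i hi h => hvs (h ▸ hi)
  have hB : (A.submatrix ((↑) : s → V) (↑)).IsHermitian :=
    isHermitian_iff_isSymm.2 (hA.1.submatrix _)
  have : Nonempty s := hne.to_subtype
  obtain ⟨μ, hμ, hμ_le⟩ := hB.exists_hasEigenvalue_forall_le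
  have hBc := hB.mulVec_eq_smul_of_forall_exists_mulVec_eq (μ := μ) fun l hl hlμ =>
    hcol l hl ⟨μ, hμ, (hμ_le l hl).lt_of_ne' hlμ⟩
  obtain ⟨a, ha, w, hw, haw⟩ := hG.preconnected.exists_adj_mem_notMem (s := ↑s) hne.choose_spec hvs
  obtain rfl : w = v := by_contra fun hwv => hclosed a ha w hw hwv haw
  have hc_ne : ∀ i : s, A i w ≠ 0 :=
    hHconn.preconnected.forall_of_forall_adj_imp
      (fun i j hij hi hj => hi <| eq_zero_of_mulVec_eq_smul_of_apply_neg
        (fun i j hij => hA.apply_nonpos_s13 (Subtype.coe_injective.ne hij))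
        (fun i => hA.apply_nonpos_s13 (hsv i i.2)) hBc (hA.apply_neg hij.symm) hj)
      (a := ⟨a, ha⟩) (hA.apply_neg haw).ne
  intro i hi
  have hiw : A i w < 0 := (hA.apply_nonpos_s13 (hsv i hi)).lt_of_ne (hc_ne ⟨i, hi⟩)
  exact ⟨hiw, (hA.adj_of_apply_ne_zero (hsv i hi) hiw.ne).symm⟩

/-- Let `G` be connected, `v` a cut-vertex, `A` a discrete Schrödinger
operator of `G`, and `s` the vertex set of a connected component `H` of `G − v`.  If for every
eigenvalue `λ` of `A[H]` other than the smallest one the column `A[H,v]` lies in the column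
space of `A[H] − λI`, then `A[H,v]` is entrywise negative; in particular `v` is adjacent to
every vertex of `H`. -/
theorem cut_vertex_fully_joined_component
    {V : Type*} [Fintype V] [DecidableEq V]
    (G : SimpleGraph V) (hG : G.Connected) (v : V)
    (hcut : ¬ (G.induce ({v}ᶜ : Set V)).Connected)
    (A : Matrix V V ℝ) (hA : IsDSO G A)
    (s : Finset V) (hvs : v ∉ s) (hne : s.Nonempty)
    (hHconn : (G.induce (↑s : Set V)).Connected)
    (hclosed : ∀ i ∈ s, ∀ j : V, j ∉ s → j ≠ v → ¬ G.Adj i j)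
    (hcol : ∀ lam : ℝ,
      Module.End.HasEigenvalue
        (Matrix.toLin' (A.submatrix (fun i : {x // x ∈ s} => (i : V))
          (fun i : {x // x ∈ s} => (i : V)))) lam →
      (∃ μ : ℝ, Module.End.HasEigenvalue
        (Matrix.toLin' (A.submatrix (fun i : {x // x ∈ s} => (i : V))
          (fun i : {x // x ∈ s} => (i : V)))) μ ∧ μ < lam) →
      ∃ x : {x // x ∈ s} → ℝ,
        (A.submatrix (fun i : {x // x ∈ s} => (i : V))
            (fun i : {x // x ∈ s} => (i : V)) - lam • (1 : Matrix _ _ ℝ)).mulVec x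
          = fun i : {x // x ∈ s} => A (i : V) v) :
    ∀ i ∈ s, A i v < 0 ∧ G.Adj v i :=
  cut_vertex_fully_joined_component_general G hG v A hA s hvs hne hHconn hclosed hcol
end

section
/- Let A and B be real symmetric matrices. The direct sum A ⊕ B has the strong spectral property if and only if both A and B have the strong spectral property and A and B share no common eigenvalue. -/
/-!
Split a symmetric `X` into blocks. Tested against `A ⊕ B`, the SSP conditions on `X` become the
SSP conditions on the diagonal blocks (against `A` and `B`) together with `X₂₁ = X₁₂ᵀ` and the
intertwining relation `A X₁₂ = X₁₂ B`. An intertwiner maps each eigenspace of `B` into the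
eigenspace of `A` for the same eigenvalue; as the eigenspaces of the symmetric `B` span, all
intertwiners vanish when `A` and `B` share no eigenvalue. Conversely, eigenvectors `u`, `v` of `A`
and `B` for a common eigenvalue give the nonzero intertwiner `u vᵀ`.
-/

/-- A real symmetric matrix `A` has the strong spectral property (SSP) if the only symmetric
matrix `X` with `A ∘ X = O`, `I ∘ X = O`, and `AX − XA = O` is `X = O`. -/
def HasSSP {V : Type*} [Fintype V] [DecidableEq V] (A : Matrix V V ℝ) : Prop :=
  ∀ X : Matrix V V ℝ, X.IsSymm →
    (∀ i j, A i j * X i j = 0) → (∀ i, X i i = 0) → A * X - X * A = 0 → X = 0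

open Matrix Module.End

theorem Module.End.eq_zero_of_comp_eq_comp {K V W : Type*} [Field K] [AddCommGroup V]
    [Module K V] [AddCommGroup W] [Module K W] {f : Module.End K V} {g : Module.End K W}
    {T : W →ₗ[K] V} (hT : f ∘ₗ T = T ∘ₗ g) (hg : ⨆ μ, g.eigenspace μ = ⊤)
    (hfg : ∀ μ, ¬ (f.HasEigenvalue μ ∧ g.HasEigenvalue μ)) : T = 0 := by
  suffices ∀ μ, g.eigenspace μ ≤ LinearMap.ker T by
    rw [← LinearMap.ker_eq_top, eq_top_iff, ← hg]
    exact iSup_le this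
  intro μ w hw
  have hTw : T w ∈ f.eigenspace μ := by
    rw [mem_eigenspace_iff] at hw ⊢
    rw [← LinearMap.comp_apply, hT, LinearMap.comp_apply, hw, map_smul]
  by_cases hμ : g.HasEigenvalue μ
  · have hf : f.eigenspace μ = ⊥ := by
      by_contra hne
      exact hfg μ ⟨hasEigenvalue_iff.mpr hne, hμ⟩
    rw [hf, Submodule.mem_bot] at hTw
    exact hTw
  · rw [hasEigenvalue_iff, not_not] at hμ
    rw [hμ, Submodule.mem_bot] at hw
    rw [hw]
    exact Submodule.zero_mem _

theorem Matrix.IsHermitian.iSup_eigenspace_toLin'_eq_top {𝕜 n : Type*} [RCLike 𝕜] [Fintype n]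
    [DecidableEq n] {A : Matrix n n 𝕜} (hA : A.IsHermitian) :
    ⨆ μ, eigenspace A.toLin' μ = ⊤ := by
  refine (Submodule.eq_top_iff_forall_basis_mem
    (hA.eigenvectorBasis.toBasis.map (WithLp.linearEquiv 2 𝕜 (n → 𝕜)))).mpr fun j => ?_
  refine Submodule.mem_iSup_of_mem (hA.eigenvalues j : 𝕜) ?_
  rw [mem_eigenspace_iff]
  exact (hA.mulVec_eigenvectorBasis j).trans (RCLike.real_smul_eq_coe_smul _ _)

theorem Matrix.eq_zero_of_mul_eq_mul_of_isHermitian {𝕜 m n : Type*} [RCLike 𝕜] [Fintype m]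
    [DecidableEq m] [Fintype n] [DecidableEq n] {A : Matrix m m 𝕜} {B : Matrix n n 𝕜}
    (hB : B.IsHermitian) (hAB : ∀ μ, ¬ (HasEigenvalue A.toLin' μ ∧ HasEigenvalue B.toLin' μ))
    {X : Matrix m n 𝕜} (hX : A * X = X * B) : X = 0 := by
  apply toLin'.injective
  rw [map_zero]
  refine eq_zero_of_comp_eq_comp ?_ hB.iSup_eigenspace_toLin'_eq_top hAB
  rw [← toLin'_mul, ← toLin'_mul, hX]

def IsSSPCandidate {V : Type*} [Fintype V] (A X : Matrix V V ℝ) : Prop :=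
  X.IsSymm ∧ (∀ i j, A i j * X i j = 0) ∧ (∀ i, X i i = 0) ∧ Commute A X

section

variable {l m : Type*} [Fintype l] [Fintype m] {A : Matrix l l ℝ} {B : Matrix m m ℝ}

theorem isSSPCandidate_zero : IsSSPCandidate A 0 :=
  ⟨isSymm_zero, by simp, by simp, Commute.zero_right A⟩

theorem isSSPCandidate_fromBlocks {X₁₁ : Matrix l l ℝ} {X₁₂ : Matrix l m ℝ}
    {X₂₂ : Matrix m m ℝ} (h₁₁ : IsSSPCandidate A X₁₁) (h₂₂ : IsSSPCandidate B X₂₂)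
    (h₁₂ : A * X₁₂ = X₁₂ * B) (h₂₁ : B * X₁₂ᵀ = X₁₂ᵀ * A) :
    IsSSPCandidate (fromBlocks A 0 0 B) (fromBlocks X₁₁ X₁₂ X₁₂ᵀ X₂₂) := by
  obtain ⟨hs₁, hh₁, hd₁, hc₁⟩ := h₁₁
  obtain ⟨hs₂, hh₂, hd₂, hc₂⟩ := h₂₂
  refine ⟨hs₁.fromBlocks rfl hs₂, ?_, ?_, ?_⟩
  · rintro (i | i) (j | j) <;> simp [hh₁, hh₂]
  · rintro (i | i) <;> simp [hd₁, hd₂]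
  · simp only [Commute, SemiconjBy, fromBlocks_multiply, Matrix.mul_zero, Matrix.zero_mul,
      add_zero, zero_add, hc₁.eq, hc₂.eq, h₁₂, h₂₁]

theorem IsSSPCandidate.of_fromBlocks {X₁₁ : Matrix l l ℝ} {X₁₂ : Matrix l m ℝ}
    {X₂₁ : Matrix m l ℝ} {X₂₂ : Matrix m m ℝ}
    (h : IsSSPCandidate (fromBlocks A 0 0 B) (fromBlocks X₁₁ X₁₂ X₂₁ X₂₂)) :
    IsSSPCandidate A X₁₁ ∧ IsSSPCandidate B X₂₂ ∧ X₂₁ = X₁₂ᵀ ∧ A * X₁₂ = X₁₂ * B := by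
  obtain ⟨hs, hh, hd, hc⟩ := h
  obtain ⟨hs₁, hs₂₁, -, hs₂⟩ := isSymm_fromBlocks_iff.mp hs
  simp only [Commute, SemiconjBy, fromBlocks_multiply, Matrix.mul_zero, Matrix.zero_mul,
    add_zero, zero_add, fromBlocks_inj] at hc
  exact ⟨⟨hs₁, fun i j => by simpa using hh (.inl i) (.inl j), fun i => by simpa using hd (.inl i),
    hc.1⟩, ⟨hs₂, fun i j => by simpa using hh (.inr i) (.inr j), fun i => by simpa using hd (.inr i),
    hc.2.2.2⟩, hs₂₁.symm, hc.2.1⟩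

theorem mul_vecMulVec_eq_vecMulVec_mul {u : l → ℝ} {v : m → ℝ} {μ : ℝ} (hu : A *ᵥ u = μ • u)
    (hv : v ᵥ* B = μ • v) : A * vecMulVec u v = vecMulVec u v * B := by
  rw [mul_vecMulVec, vecMulVec_mul, hu, hv, smul_vecMulVec, vecMulVec_smul]

variable [DecidableEq l] [DecidableEq m]

theorem hasSSP_iff : HasSSP A ↔ ∀ X, IsSSPCandidate A X → X = 0 := by
  simp only [HasSSP, IsSSPCandidate, sub_eq_zero, Commute, SemiconjBy, and_imp]

namespace HasSSP

theorem of_fromBlocks_left (h : HasSSP (fromBlocks A 0 0 B)) : HasSSP A := by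
  refine hasSSP_iff.mpr fun X hX => ?_
  have := hasSSP_iff.mp h _ (isSSPCandidate_fromBlocks hX isSSPCandidate_zero (X₁₂ := 0)
    (by simp) (by simp))
  rw [← fromBlocks_zero, fromBlocks_inj] at this
  exact this.1

theorem of_fromBlocks_right (h : HasSSP (fromBlocks A 0 0 B)) : HasSSP B := by
  refine hasSSP_iff.mpr fun X hX => ?_
  have := hasSSP_iff.mp h _ (isSSPCandidate_fromBlocks isSSPCandidate_zero hX (X₁₂ := 0)
    (by simp) (by simp))
  rw [← fromBlocks_zero, fromBlocks_inj] at this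
  exact this.2.2.2

theorem not_hasEigenvalue_of_fromBlocks (hA : A.IsSymm) (hB : B.IsSymm)
    (h : HasSSP (fromBlocks A 0 0 B)) (μ : ℝ) :
    ¬ (HasEigenvalue A.toLin' μ ∧ HasEigenvalue B.toLin' μ) := by
  rintro ⟨hAμ, hBμ⟩
  obtain ⟨u, hu, hu0⟩ := hAμ.exists_hasEigenvector
  obtain ⟨v, hv, hv0⟩ := hBμ.exists_hasEigenvector
  rw [mem_eigenspace_iff, toLin'_apply] at hu hv
  have huA : u ᵥ* A = μ • u := by rw [← hA.eq, vecMul_transpose, hu]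
  have hvB : v ᵥ* B = μ • v := by rw [← hB.eq, vecMul_transpose, hv]
  have := hasSSP_iff.mp h _ (isSSPCandidate_fromBlocks isSSPCandidate_zero isSSPCandidate_zero
    (mul_vecMulVec_eq_vecMulVec_mul hu hvB)
    (by rw [transpose_vecMulVec]; exact mul_vecMulVec_eq_vecMulVec_mul hv huA))
  rw [← fromBlocks_zero, fromBlocks_inj] at this
  obtain ⟨i, hi⟩ := Function.ne_iff.mp hu0
  obtain ⟨j, hj⟩ := Function.ne_iff.mp hv0
  exact mul_ne_zero hi hj (congrFun (congrFun this.2.1 i) j)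

theorem fromBlocks (hB : B.IsSymm) (hA' : HasSSP A) (hB' : HasSSP B)
    (hAB : ∀ μ, ¬ (HasEigenvalue A.toLin' μ ∧ HasEigenvalue B.toLin' μ)) :
    HasSSP (fromBlocks A 0 0 B) := by
  refine hasSSP_iff.mpr fun X hX => ?_
  rw [← fromBlocks_toBlocks X] at hX ⊢
  obtain ⟨h₁₁, h₂₂, h₂₁, h₁₂⟩ := hX.of_fromBlocks
  have hX₁₂ := eq_zero_of_mul_eq_mul_of_isHermitian (isHermitian_iff_isSymm.mpr hB) hAB h₁₂
  rw [hasSSP_iff.mp hA' _ h₁₁, hasSSP_iff.mp hB' _ h₂₂, h₂₁, hX₁₂, transpose_zero, fromBlocks_zero]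

end HasSSP

end

/-- The direct sum `A ⊕ B` of two real symmetric matrices has the SSP if and
only if both `A` and `B` have the SSP and they share no common eigenvalue. -/
theorem direct_sum_SSP_iff
    {m n : ℕ} (A : Matrix (Fin m) (Fin m) ℝ) (B : Matrix (Fin n) (Fin n) ℝ)
    (hA : A.IsSymm) (hB : B.IsSymm) :
    HasSSP (Matrix.fromBlocks A 0 0 B) ↔
      (HasSSP A ∧ HasSSP B ∧
        ∀ lam : ℝ, ¬ (Module.End.HasEigenvalue (Matrix.toLin' A) lam ∧
          Module.End.HasEigenvalue (Matrix.toLin' B) lam)) :=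
  ⟨fun h => ⟨h.of_fromBlocks_left, h.of_fromBlocks_right,
      h.not_hasEigenvalue_of_fromBlocks hA hB⟩,
    fun ⟨hA', hB', hAB⟩ => HasSSP.fromBlocks hB hA' hB' hAB⟩
end

section
/- Every real diagonal matrix with distinct diagonal entries has the strong spectral property. Consequently, for every graph G on n vertices and every set Λ of n distinct real numbers, there exists a discrete Schrödinger operator of G with the SSP whose spectrum is Λ. -/
open Polynomial

/-!
A hollow `X` commuting with `diagonal d + E` satisfies `(d i - d j) * X i j = (X * E - E * X) i j`;
at a largest entry of `X` the left side dominates the right one once `E` is small compared with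
the gaps of `d`, so every matrix near `diagonal d` (in particular `diagonal d` itself) has the SSP.

For a graph, conjugate `diagonal d` by `exp K` with `K` skew-symmetric, which keeps symmetry and
spectrum. In coordinates given by the strictly upper entries, the map from `K` to the strictly upper
entries of `exp K * diagonal d * exp (-K)` has derivative `K i j ↦ (d j - d i) * K i j` at `0`,
which is invertible. By the inverse function theorem, `-t` times the adjacency matrix of the graph
has the same strictly upper entries as such a conjugate close to `diagonal d`, for small `t > 0`.
-/

open Matrix Filter Topology NormedSpace

section NearDiagonal

variable {ι : Type*} [Fintype ι]

theorem Matrix.abs_mul_apply_le {A B : Matrix ι ι ℝ} {a b : ℝ} (hA : ∀ i j, |A i j| ≤ a)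
    (hB : ∀ i j, |B i j| ≤ b) (i j : ι) : |(A * B) i j| ≤ Fintype.card ι * (a * b) := by
  calc |(A * B) i j| ≤ ∑ k, |A i k * B k j| := Finset.abs_sum_le_sum_abs _ _
    _ ≤ ∑ _k : ι, a * b := by
      gcongr with k
      rw [abs_mul]
      exact mul_le_mul (hA i k) (hB k j) (abs_nonneg _) ((abs_nonneg _).trans (hA i k))
    _ = Fintype.card ι * (a * b) := by simp

variable [DecidableEq ι]

theorem Matrix.eq_zero_of_commute_of_near_diagonal {d : ι → ℝ} {A X : Matrix ι ι ℝ} {ε : ℝ}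
    (hgap : ∀ i j, i ≠ j → 2 * Fintype.card ι * ε < |d i - d j|)
    (hA : ∀ i j, |(A - diagonal d) i j| ≤ ε) (hX : ∀ i, X i i = 0) (hAX : Commute A X) :
    X = 0 := by
  rcases isEmpty_or_nonempty ι with _ | _
  · exact Subsingleton.elim _ _
  obtain ⟨⟨i, j⟩, -, hmax⟩ :=
    Finset.exists_max_image Finset.univ (fun p : ι × ι => |X p.1 p.2|) Finset.univ_nonempty
  set m := |X i j|
  have hm : ∀ k l, |X k l| ≤ m := fun k l => hmax (k, l) (Finset.mem_univ _)
  suffices m ≤ 0 from ext fun k l => abs_nonpos_iff.mp ((hm k l).trans this)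
  by_cases hij : i = j
  · simp [m, hij, hX]
  set E := A - diagonal d
  have hcomm : (d i - d j) * X i j = (X * E) i j - (E * X) i j := by
    have h := congrFun (congrFun hAX.eq i) j
    simp only [E, Matrix.mul_sub, Matrix.sub_mul, sub_apply, diagonal_mul, mul_diagonal, h]
    ring
  have hbound : |d i - d j| * m ≤ 2 * Fintype.card ι * ε * m := by
    calc |d i - d j| * m = |(X * E) i j - (E * X) i j| := by rw [← hcomm, abs_mul]
      _ ≤ |(X * E) i j| + |(E * X) i j| := abs_sub _ _
      _ ≤ Fintype.card ι * (m * ε) + Fintype.card ι * (ε * m) :=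
        add_le_add (abs_mul_apply_le hm hA i j) (abs_mul_apply_le hA hm i j)
      _ = 2 * Fintype.card ι * ε * m := by ring
  nlinarith [hgap i j hij, abs_nonneg (X i j)]

theorem eventually_hasSSP_nhds_diagonal {d : ι → ℝ} (hd : Function.Injective d) :
    ∀ᶠ A in 𝓝 (diagonal d), HasSSP A := by
  have hgap : ∀ᶠ ε in 𝓝 (0 : ℝ), ∀ i j, i ≠ j → 2 * Fintype.card ι * ε < |d i - d j| := by
    refine eventually_all.2 fun i => eventually_all.2 fun j => ?_
    by_cases hij : i = j
    · simp [hij]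
    have hlim : Tendsto (fun ε : ℝ => 2 * Fintype.card ι * ε) (𝓝 0) (𝓝 0) := by
      simpa using (continuous_const_mul (2 * Fintype.card ι : ℝ)).tendsto 0
    exact (hlim.eventually_lt_const (abs_pos.2 (sub_ne_zero.2 (hd.ne hij)))).mono
      fun ε hε _ => hε
  obtain ⟨ε, hεgap, hε⟩ := ((hgap.filter_mono nhdsWithin_le_nhds).and
    (self_mem_nhdsWithin (s := Set.Ioi (0 : ℝ)))).exists
  have hnear : ∀ᶠ A in 𝓝 (diagonal d), ∀ i j, |(A - diagonal d) i j| ≤ ε := by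
    refine eventually_all.2 fun i => eventually_all.2 fun j => ?_
    filter_upwards [((continuous_id.matrix_elem i j).tendsto (diagonal d)).eventually
      (Metric.ball_mem_nhds _ hε)] with A hA
    exact (Real.dist_eq _ _ ▸ hA).le
  filter_upwards [hnear] with A hA X _ _ hX hcomm
  exact eq_zero_of_commute_of_near_diagonal hεgap hA hX (sub_eq_zero.mp hcomm)

theorem hasSSP_diagonal {d : ι → ℝ} (hd : Function.Injective d) : HasSSP (diagonal d) :=
  (eventually_hasSSP_nhds_diagonal hd).self_of_nhds

end NearDiagonal

section Conjugation

variable {ι 𝕂 : Type*} [Fintype ι] [DecidableEq ι] [RCLike 𝕂]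

theorem Matrix.isSymm_exp_mul_mul_exp_neg {K S : Matrix ι ι 𝕂} (hK : Kᵀ = -K) (hS : S.IsSymm) :
    (exp K * S * exp (-K)).IsSymm := by
  rw [IsSymm, transpose_mul, transpose_mul, ← exp_transpose, ← exp_transpose, hS.eq,
    transpose_neg, hK, neg_neg, Matrix.mul_assoc]

theorem Matrix.charpoly_exp_mul_mul_exp_neg (K S : Matrix ι ι 𝕂) :
    (exp K * S * exp (-K)).charpoly = S.charpoly := by
  rw [Matrix.exp_neg]
  exact charpoly_units_conj (isUnit_exp K).unit S

end Conjugation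

theorem hasStrictFDerivAt_exp_mul_mul_exp_neg {𝕂 𝔸 : Type*} [RCLike 𝕂] [NormedRing 𝔸]
    [NormedAlgebra 𝕂 𝔸] [CompleteSpace 𝔸] (a : 𝔸) :
    HasStrictFDerivAt (fun x : 𝔸 => exp x * a * exp (-x))
      ((ContinuousLinearMap.mul 𝕂 𝔸).flip a - ContinuousLinearMap.mul 𝕂 𝔸 a) 0 := by
  have hexp : HasStrictFDerivAt (exp : 𝔸 → 𝔸) (1 : 𝔸 →L[𝕂] 𝔸) 0 := hasStrictFDerivAt_exp_zero
  have hexp_neg : HasStrictFDerivAt (fun x : 𝔸 => exp (-x)) (-1 : 𝔸 →L[𝕂] 𝔸) 0 := by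
    simpa using
      (neg_zero (G := 𝔸) ▸ hexp).comp (0 : 𝔸) (hasStrictFDerivAt_id (𝕜 := 𝕂) (0 : 𝔸)).neg
  refine ((hexp.mul_const' a).mul' hexp_neg).congr_fderiv ?_
  ext x
  simp [sub_eq_neg_add]

section UpperCoordinates

variable {ι : Type*} [LinearOrder ι]

abbrev UpperPairs (ι : Type*) [LT ι] := {p : ι × ι // p.1 < p.2}

def skewOfUpper : (UpperPairs ι → ℝ) →ₗ[ℝ] Matrix ι ι ℝ where
  toFun v := of fun i j =>
    if h : i < j then v ⟨(i, j), h⟩ else if h : j < i then -v ⟨(j, i), h⟩ else 0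
  map_add' v w := by
    ext i j
    simp only [of_apply, Matrix.add_apply, Pi.add_apply]
    split_ifs <;> ring
  map_smul' c v := by
    ext i j
    simp only [of_apply, Matrix.smul_apply, Pi.smul_apply, smul_eq_mul, RingHom.id_apply]
    split_ifs <;> ring

def upperEntries : Matrix ι ι ℝ →ₗ[ℝ] (UpperPairs ι → ℝ) where
  toFun A p := A p.1.1 p.1.2
  map_add' _ _ := rfl
  map_smul' _ _ := rfl

@[simp]
theorem upperEntries_apply (A : Matrix ι ι ℝ) (p : UpperPairs ι) :
    upperEntries A p = A p.1.1 p.1.2 :=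
  rfl

theorem skewOfUpper_apply_upper (v : UpperPairs ι → ℝ) (p : UpperPairs ι) :
    skewOfUpper v p.1.1 p.1.2 = v p := by
  simp [skewOfUpper, p.2]

theorem upperEntries_diagonal (d : ι → ℝ) : upperEntries (diagonal d) = 0 :=
  funext fun p => diagonal_apply_ne _ p.2.ne

theorem transpose_skewOfUpper (v : UpperPairs ι → ℝ) : (skewOfUpper v)ᵀ = -skewOfUpper v := by
  ext i j
  simp only [skewOfUpper, LinearMap.coe_mk, AddHom.coe_mk, transpose_apply, of_apply,
    Matrix.neg_apply]
  rcases lt_trichotomy i j with h | rfl | h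
  · simp [h, h.not_gt]
  · simp
  · simp [h, h.not_gt]

variable [Fintype ι] {d : ι → ℝ}

noncomputable def gapScaling (hd : Function.Injective d) :
    (UpperPairs ι → ℝ) ≃L[ℝ] (UpperPairs ι → ℝ) :=
  .piCongrRight fun p => ContinuousLinearEquiv.unitsEquivAut ℝ
    (Units.mk0 (d p.1.2 - d p.1.1) (sub_ne_zero.2 (hd.ne p.2.ne')))

-- Any norm would do; this one makes matrices a Banach algebra, where `exp` is differentiable.
attribute [local instance] Matrix.linftyOpNormedAddCommGroup Matrix.linftyOpNormedSpace
  Matrix.linftyOpNormedRing Matrix.linftyOpNormedAlgebra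

theorem hasStrictFDerivAt_upperEntries_conj (hd : Function.Injective d) :
    HasStrictFDerivAt
      (fun v => upperEntries (exp (skewOfUpper v) * diagonal d * exp (-skewOfUpper v)))
      (gapScaling hd : (UpperPairs ι → ℝ) →L[ℝ] (UpperPairs ι → ℝ)) 0 := by
  have hK := (LinearMap.toContinuousLinearMap (skewOfUpper (ι := ι))).hasStrictFDerivAt (x := 0)
  have hconj := hasStrictFDerivAt_exp_mul_mul_exp_neg (𝕂 := ℝ) (diagonal d)
  rw [← map_zero (LinearMap.toContinuousLinearMap (skewOfUpper (ι := ι)))] at hconj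
  refine ((LinearMap.toContinuousLinearMap upperEntries).hasStrictFDerivAt.comp 0
    (hconj.comp 0 hK)).congr_fderiv ?_
  ext v p
  change (skewOfUpper v * diagonal d - diagonal d * skewOfUpper v) p.1.1 p.1.2 = _
  simp only [Matrix.sub_apply, mul_diagonal, diagonal_mul, skewOfUpper_apply_upper, gapScaling,
    ContinuousLinearEquiv.coe_coe, ContinuousLinearEquiv.piCongrRight_apply,
    ContinuousLinearEquiv.unitsEquivAut_apply, Units.val_mk0]
  ring

theorem eventually_exists_hasSSP_upperEntries_eq (hd : Function.Injective d) :
    ∀ᶠ y in 𝓝 (0 : UpperPairs ι → ℝ), ∃ K : Matrix ι ι ℝ, Kᵀ = -K ∧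
      HasSSP (exp K * diagonal d * exp (-K)) ∧
      upperEntries (exp K * diagonal d * exp (-K)) = y := by
  set f : (UpperPairs ι → ℝ) → Matrix ι ι ℝ :=
    fun v => exp (skewOfUpper v) * diagonal d * exp (-skewOfUpper v)
  have hf0 : f 0 = diagonal d := by simp [f]
  have hSSP : ∀ᶠ v in 𝓝 0, HasSSP (f v) := by
    have hf : Continuous f := by
      have := LinearMap.continuous_of_finiteDimensional (skewOfUpper (ι := ι))
      fun_prop
    exact (hf.tendsto' 0 _ hf0).eventually (eventually_hasSSP_nhds_diagonal hd)
  have hmap : map (fun v => upperEntries (f v)) (𝓝 0) = 𝓝 0 := by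
    simpa [hf0, upperEntries_diagonal] using
      (hasStrictFDerivAt_upperEntries_conj hd).map_nhds_eq_of_equiv
  rw [← hmap, eventually_map]
  exact hSSP.mono fun v hv => ⟨skewOfUpper v, transpose_skewOfUpper v, hv, rfl⟩

end UpperCoordinates

section Schrodinger

variable {ι : Type*} [Fintype ι] [LinearOrder ι]

theorem isDSO_of_upperEntries_eq_smul_adjMatrix {G : SimpleGraph ι} [DecidableRel G.Adj]
    {A : Matrix ι ι ℝ} {t : ℝ} (hA : A.IsSymm) (ht : 0 < t)
    (hup : upperEntries A = upperEntries (-t • G.adjMatrix ℝ)) : IsDSO G A := by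
  have hentry : ∀ i j, i ≠ j → A i j = (-t • G.adjMatrix ℝ) i j := by
    intro i j hij
    rcases hij.lt_or_gt with h | h
    · exact congrFun hup ⟨(i, j), h⟩
    · rw [hA.apply j i, (G.isSymm_adjMatrix.smul (-t)).apply j i]
      exact congrFun hup ⟨(j, i), h⟩
  refine ⟨hA, fun i j hij => ⟨fun hadj => ?_, fun hadj => ?_⟩⟩ <;>
    simp [hentry i j hij, SimpleGraph.adjMatrix_apply, hadj, ht]

theorem exists_isDSO_hasSSP_charpoly_eq (G : SimpleGraph ι) {d : ι → ℝ}
    (hd : Function.Injective d) :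
    ∃ A : Matrix ι ι ℝ, IsDSO G A ∧ HasSSP A ∧ A.charpoly = ∏ i, (X - C (d i)) := by
  classical
  set w := upperEntries (-G.adjMatrix ℝ)
  have hw : Tendsto (fun t : ℝ => t • w) (𝓝[>] 0) (𝓝 0) := by
    simpa using ((tendsto_id (x := 𝓝 (0 : ℝ))).mono_left nhdsWithin_le_nhds).smul_const w
  obtain ⟨t, ⟨K, hK, hSSP, hup⟩, ht⟩ :=
    ((hw.eventually (eventually_exists_hasSSP_upperEntries_eq hd)).and
      self_mem_nhdsWithin).exists
  have hup' :
      upperEntries (exp K * diagonal d * exp (-K)) = upperEntries (-t • G.adjMatrix ℝ) := by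
    rw [hup, neg_smul, ← smul_neg, map_smul]
  refine ⟨_, isDSO_of_upperEntries_eq_smul_adjMatrix
    (isSymm_exp_mul_mul_exp_neg hK (isSymm_diagonal d)) ht hup', hSSP, ?_⟩
  rw [charpoly_exp_mul_mul_exp_neg, charpoly_diagonal]

end Schrodinger

/-- Every real diagonal matrix with distinct diagonal entries has the SSP;
consequently, for every graph `G` on `n` vertices and every list of `n` distinct real numbers,
there is a discrete Schrödinger operator of `G` with the SSP whose spectrum is that list. -/
theorem diagonal_SSP_and_distinct_spectrum_realizable :
    (∀ (n : ℕ) (d : Fin n → ℝ), Function.Injective d → HasSSP (Matrix.diagonal d)) ∧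
    (∀ (n : ℕ) (G : SimpleGraph (Fin n)) (lam : Fin n → ℝ), Function.Injective lam →
      ∃ A : Matrix (Fin n) (Fin n) ℝ, IsDSO G A ∧ HasSSP A ∧
        A.charpoly = ∏ i : Fin n, (X - C (lam i))) :=
  ⟨fun _ _ hd => hasSSP_diagonal hd, fun _ G _ hlam => exists_isDSO_hasSSP_charpoly_eq G hlam⟩
end
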